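/- arXiv:2510.08463 — 7 statements merged into one kernel-verified Lean document; each statement's English description precedes it below -/
import Mathlib

section
/- Let x_1 ≥ x_2 ≥ ... ≥ x_n ≥ 0 be real numbers with sum 1, let 1 ≤ k ≤ n, let γ = (1/k)·∑_{j=k+1}^n x_j, and let z_1 ≥ ... ≥ z_k ≥ 0 be real numbers with ∑_{j=1}^k z_j = 1. Then the vector (−γ, ..., −γ, x_{k+1}, ..., x_n) (with k copies of −γ) is majorized by the vector (x_1 − z_1, ..., x_k − z_k, x_{k+1}, ..., x_n). -/
/-!
On the first `k` coordinates both vectors have total `-kγ`, and the first one is constant there.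
A constant vector is majorized by any vector with the same sum: every `s`-subset of a block with
average `c` can be matched by an `s`-subset of the other vector with sum at least `s * c`, found by
repeatedly discarding an entry below the average. Outside the block the two vectors coincide.
-/

open BigOperators Finset

/-- `a` is majorized by `b`: for every `r`, the sum of the `r` largest entries of `a`
is at most the sum of the `r` largest entries of `b` (equivalently, every `r`-element
partial sum of `a` is dominated by some `r`-element partial sum of `b`), and the total
sums agree. -/
def IsMajorizedBy {n : ℕ} (a b : Fin n → ℝ) : Prop :=
  (∀ S : Finset (Fin n), ∃ T : Finset (Fin n), T.card = S.card ∧ ∑ i ∈ S, a i ≤ ∑ i ∈ T, b i)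
  ∧ ∑ i, a i = ∑ i, b i

namespace Finset

variable {ι M : Type*} [AddCommGroup M] [LinearOrder M] [IsOrderedAddMonoid M]

theorem exists_subset_card_eq_nsmul_le_sum (f : ι → M) (c : M) {s : ℕ} (F : Finset ι)
    (hF : #F • c ≤ ∑ i ∈ F, f i) (hs : s ≤ #F) :
    ∃ T ⊆ F, #T = s ∧ s • c ≤ ∑ i ∈ T, f i := by
  classical
  induction F using Finset.strongInduction with
  | H F ih =>
  rcases hs.eq_or_lt with rfl | hs
  · exact ⟨F, subset_rfl, rfl, hF⟩
  by_cases hge : ∀ i ∈ F, c ≤ f i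
  · obtain ⟨T, hTF, rfl⟩ := exists_subset_card_eq hs.le
    refine ⟨T, hTF, rfl, ?_⟩
    simpa using sum_le_sum fun i hi => hge i (hTF hi)
  push Not at hge
  obtain ⟨m, hmF, hm⟩ := hge
  -- dropping an entry below `c` keeps the average of the rest at least `c`
  have hF' : #(F.erase m) • c ≤ ∑ i ∈ F.erase m, f i := by
    rw [← add_sum_erase F f hmF, ← card_erase_add_one hmF, succ_nsmul] at hF
    have := hF.trans (add_le_add_left hm.le _)
    rwa [add_comm c, add_le_add_iff_right] at this
  obtain ⟨T, hTF, hT⟩ := ih _ (erase_ssubset hmF) hF'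
    (by rw [card_erase_of_mem hmF]; omega)
  exact ⟨T, hTF.trans (erase_subset m F), hT⟩

end Finset

theorem isMajorizedBy_of_eq_const_on {n : ℕ} {a b : Fin n → ℝ} (F : Finset (Fin n)) (c : ℝ)
    (ha : ∀ i ∈ F, a i = c) (hab : ∀ i ∉ F, a i = b i) (hb : ∑ i ∈ F, b i = #F * c) :
    IsMajorizedBy a b := by
  have hsum_a (S : Finset (Fin n)) : ∑ i ∈ S, a i = #(S ∩ F) * c + ∑ i ∈ S \ F, b i := by
    rw [← sum_inter_add_sum_sdiff S F, sum_congr rfl fun i hi => ha i (mem_inter.1 hi).2,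
      sum_const, nsmul_eq_mul, sum_congr rfl fun i hi => hab i (mem_sdiff.1 hi).2]
  refine ⟨fun S => ?_, ?_⟩
  · obtain ⟨T, hTF, hTcard, hT⟩ := exists_subset_card_eq_nsmul_le_sum b c F
      (by rw [hb, nsmul_eq_mul]) (card_le_card (inter_subset_right (s₁ := S)))
    have hdisj : Disjoint T (S \ F) := disjoint_of_subset_left hTF disjoint_sdiff
    refine ⟨T ∪ S \ F, ?_, ?_⟩
    · rw [card_union_of_disjoint hdisj, hTcard, card_inter_add_card_sdiff]
    · rw [hsum_a, sum_union hdisj, ← nsmul_eq_mul]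
      exact add_le_add_left hT _
  · rw [hsum_a, univ_inter, ← hb, ← sum_inter_add_sum_sdiff univ F, univ_inter]

theorem stmt_0_general (n k : ℕ) (hk1 : 1 ≤ k) (hkn : k ≤ n)
    (x : Fin n → ℝ) (hxsum : ∑ i, x i = 1)
    (z : Fin k → ℝ) (hzsum : ∑ i, z i = 1)
    (γ : ℝ) (hγ : γ = (1 / (k : ℝ)) * ∑ i ∈ Finset.univ.filter (fun i : Fin n => k ≤ (i : ℕ)), x i) :
    IsMajorizedBy
      (fun i : Fin n => if (i : ℕ) < k then -γ else x i)
      (fun i : Fin n => if h : (i : ℕ) < k then x i - z ⟨(i : ℕ), h⟩ else x i) := by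
  set F : Finset (Fin n) := univ.filter (fun i : Fin n => (i : ℕ) < k)
  have hF : F = univ.map (Fin.castLEEmb hkn) := by
    ext i
    simp only [F, mem_filter, mem_univ, true_and, mem_map, Fin.castLEEmb_apply, Fin.ext_iff,
      Fin.val_castLE]
    exact ⟨fun h => ⟨⟨i, h⟩, rfl⟩, fun ⟨a, ha⟩ => ha ▸ a.2⟩
  have hFcard : #F = k := by simp [hF]
  have hsplit : ∑ i ∈ F, x i + k * γ = 1 := by
    rw [hγ, ← mul_assoc, mul_one_div_cancel (by positivity), one_mul, ← hxsum,
      ← sum_filter_add_sum_filter_not univ (fun i : Fin n => (i : ℕ) < k)]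
    simp [F]
  refine isMajorizedBy_of_eq_const_on F (-γ) (fun i hi => if_pos (mem_filter.1 hi).2)
    (fun i hi => by simp only [F, mem_filter, mem_univ, true_and] at hi; simp [hi]) ?_
  have hterm (j : Fin k) : (if h : (Fin.castLEEmb hkn j : ℕ) < k then
      x (Fin.castLEEmb hkn j) - z ⟨_, h⟩ else x (Fin.castLEEmb hkn j)) =
      x (Fin.castLEEmb hkn j) - z j := dif_pos j.2
  rw [hFcard, hF, sum_map, sum_congr rfl fun j _ => hterm j, sum_sub_distrib, hzsum,
    ← sum_map univ (Fin.castLEEmb hkn) x, ← hF]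
  linarith

theorem stmt_0 (n k : ℕ) (hk1 : 1 ≤ k) (hkn : k ≤ n)
    (x : Fin n → ℝ) (hxsort : ∀ i j : Fin n, i ≤ j → x j ≤ x i)
    (hxnn : ∀ i, 0 ≤ x i) (hxsum : ∑ i, x i = 1)
    (z : Fin k → ℝ) (hzsort : ∀ i j : Fin k, i ≤ j → z j ≤ z i)
    (hznn : ∀ i, 0 ≤ z i) (hzsum : ∑ i, z i = 1)
    (γ : ℝ) (hγ : γ = (1 / (k : ℝ)) * ∑ i ∈ Finset.univ.filter (fun i : Fin n => k ≤ (i : ℕ)), x i) :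
    IsMajorizedBy
      (fun i : Fin n => if (i : ℕ) < k then -γ else x i)
      (fun i : Fin n => if h : (i : ℕ) < k then x i - z ⟨(i : ℕ), h⟩ else x i) :=
  stmt_0_general n k hk1 hkn x hxsum z hzsum γ hγ
end

section
/- Suppose 1 ≤ k ≤ n and X is an n×n density matrix with eigenvalues x_1 ≥ ... ≥ x_n ≥ 0. Then the trace-norm distance from X to the set of density matrices of rank at most k equals 2·∑_{j=k+1}^n x_j. -/
open Matrix BigOperators Finset
open scoped ComplexOrder

/-- The singular values of a square complex matrix. -/
noncomputable def singVals {n : ℕ} (A : Matrix (Fin n) (Fin n) ℂ) : Fin n → ℝ :=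
  fun i => Real.sqrt ((Matrix.isHermitian_conjTranspose_mul_self A).eigenvalues i)

/-- The trace norm: the sum of singular values. -/
noncomputable def traceNorm {n : ℕ} (A : Matrix (Fin n) (Fin n) ℂ) : ℝ :=
  ∑ i, singVals A i

/-- A density matrix: positive semidefinite with trace 1. -/
def IsDensity {n : ℕ} (X : Matrix (Fin n) (Fin n) ℂ) : Prop :=
  X.PosSemidef ∧ X.trace = 1

/-- Distance from `X` to the set of density matrices of rank at most `k`,
measured via a given norm `N`. -/
noncomputable def distToLowRank {n : ℕ} (N : Matrix (Fin n) (Fin n) ℂ → ℝ) (k : ℕ)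
    (X : Matrix (Fin n) (Fin n) ℂ) : ℝ :=
  sInf {t | ∃ Y : Matrix (Fin n) (Fin n) ℂ, IsDensity Y ∧ Y.rank ≤ k ∧ t = N (X - Y)}

/-
The optimal approximant keeps the `k` largest eigenvalues of `X` and spreads the discarded mass
`s = ∑_{j ≥ k} x_j` evenly over them, which costs exactly `2 s` in trace norm. Conversely, let `Y`
be a density matrix of rank at most `k` and `Q` the projection onto its support. By Ky Fan's
maximum principle `tr (Q X) ≤ 1 - s`, while `tr (Q Y) = 1`; since `1 - 2 Q` is a contraction and
`tr (X - Y) = 0`, `‖X - Y‖₁ ≥ tr ((1 - 2 Q) (X - Y)) = -2 tr (Q (X - Y)) ≥ 2 s`.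
-/

namespace Matrix

variable {ι : Type*} [Fintype ι] [DecidableEq ι]

lemma conjTranspose_mul_self_of_mem_unitaryGroup {U : Matrix ι ι ℂ}
    (hU : U ∈ unitaryGroup ι ℂ) : Uᴴ * U = 1 :=
  Unitary.star_mul_self_of_mem hU

lemma mul_conjTranspose_self_of_mem_unitaryGroup {U : Matrix ι ι ℂ}
    (hU : U ∈ unitaryGroup ι ℂ) : U * Uᴴ = 1 :=
  Unitary.mul_star_self_of_mem hU

lemma trace_conj_unitary {U : Matrix ι ι ℂ} (hU : U ∈ unitaryGroup ι ℂ) (M : Matrix ι ι ℂ) :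
    (U * M * Uᴴ).trace = M.trace := by
  rw [trace_mul_cycle, conjTranspose_mul_self_of_mem_unitaryGroup hU, one_mul]

lemma rank_conj_unitary {U : Matrix ι ι ℂ} (hU : U ∈ unitaryGroup ι ℂ) (M : Matrix ι ι ℂ) :
    (U * M * Uᴴ).rank = M.rank := by
  rw [mul_assoc, rank_mul_eq_right_of_isUnit_det U _ (UnitaryGroup.det_isUnit ⟨U, hU⟩),
    rank_mul_eq_left_of_isUnit_det Uᴴ M (UnitaryGroup.det_isUnit ⟨Uᴴ, Unitary.star_mem hU⟩)]

lemma charpoly_conj_unitary {U : Matrix ι ι ℂ} (hU : U ∈ unitaryGroup ι ℂ)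
    (M : Matrix ι ι ℂ) : (U * M * Uᴴ).charpoly = M.charpoly := by
  rw [charpoly_mul_comm, ← mul_assoc, conjTranspose_mul_self_of_mem_unitaryGroup hU, one_mul]

lemma trace_conj_diagonal {U : Matrix ι ι ℂ} (hU : U ∈ unitaryGroup ι ℂ) (d : ι → ℝ) :
    (U * diagonal (fun i => (d i : ℂ)) * Uᴴ).trace = ((∑ i, d i : ℝ) : ℂ) := by
  rw [trace_conj_unitary hU, trace_diagonal, Complex.ofReal_sum]

lemma conj_diagonal_sub_conj_diagonal (U : Matrix ι ι ℂ) (c d : ι → ℝ) :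
    U * diagonal (fun i => (c i : ℂ)) * Uᴴ - U * diagonal (fun i => (d i : ℂ)) * Uᴴ
      = U * diagonal (fun i => ((c i - d i : ℝ) : ℂ)) * Uᴴ := by
  rw [← sub_mul, ← mul_sub, diagonal_sub]
  push_cast
  rfl

lemma posSemidef_conj_diagonal (U : Matrix ι ι ℂ) {d : ι → ℝ} (hd : ∀ i, 0 ≤ d i) :
    (U * diagonal (fun i => (d i : ℂ)) * Uᴴ).PosSemidef :=
  (posSemidef_diagonal_iff.mpr fun i => Complex.zero_le_real.mpr (hd i)).mul_mul_conjTranspose_same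
    U

lemma IsHermitian.eq_conj_diagonal_eigenvalues {A : Matrix ι ι ℂ} (hA : A.IsHermitian) :
    A = (hA.eigenvectorUnitary : Matrix ι ι ℂ) * diagonal (fun i => (hA.eigenvalues i : ℂ))
      * (hA.eigenvectorUnitary : Matrix ι ι ℂ)ᴴ := by
  conv_lhs => rw [hA.spectral_theorem, Unitary.conjStarAlgAut_apply]
  rfl

lemma IsHermitian.sum_comp_eigenvalues_of_eq_conj_diagonal {M U : Matrix ι ι ℂ}
    (hM : M.IsHermitian) (hU : U ∈ unitaryGroup ι ℂ) {d : ι → ℝ}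
    (hMd : M = U * diagonal (fun i => (d i : ℂ)) * Uᴴ) (g : ℝ → ℝ) :
    ∑ i, g (hM.eigenvalues i) = ∑ i, g (d i) := by
  have hroots : M.charpoly.roots = univ.val.map fun i => (d i : ℂ) := by
    rw [hMd, charpoly_conj_unitary hU, charpoly_diagonal, Polynomial.roots_prod]
    · simp
    · simp [Finset.prod_ne_zero_iff, Polynomial.X_sub_C_ne_zero]
  rw [hM.roots_charpoly_eq_eigenvalues] at hroots
  simpa [Multiset.map_map, Function.comp_def] using
    congrArg (fun m => (m.map (g ∘ RCLike.re)).sum) hroots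

lemma re_trace_mul_conj_diagonal (Q V : Matrix ι ι ℂ) (c : ι → ℝ) :
    (Q * (V * diagonal (fun i => (c i : ℂ)) * Vᴴ)).trace.re
      = ∑ i, c i * ((Vᴴ * Q * V) i i).re := by
  rw [← mul_assoc, ← mul_assoc, trace_mul_comm, ← mul_assoc, ← mul_assoc]
  simp [trace, mul_diagonal, mul_comm]

lemma re_diag_conj_mem_Icc {Q V : Matrix ι ι ℂ} (hQ : Q.PosSemidef) (hQ1 : (1 - Q).PosSemidef)
    (hV : V ∈ unitaryGroup ι ℂ) (i : ι) : ((Vᴴ * Q * V) i i).re ∈ Set.Icc 0 1 := by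
  have hcompl : Vᴴ * (1 - Q) * V = 1 - Vᴴ * Q * V := by
    rw [mul_sub, sub_mul, mul_one, conjTranspose_mul_self_of_mem_unitaryGroup hV]
  have h0 := (Complex.nonneg_iff.mp ((hQ.conjTranspose_mul_mul_same V).diag_nonneg (i := i))).1
  have h1 := (Complex.nonneg_iff.mp ((hQ1.conjTranspose_mul_mul_same V).diag_nonneg (i := i))).1
  rw [hcompl, Matrix.sub_apply, one_apply_eq, Complex.sub_re, Complex.one_re] at h1
  exact ⟨h0, by linarith⟩

lemma IsHermitian.exists_support_projection {A : Matrix ι ι ℂ} (hA : A.IsHermitian) :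
    ∃ Q : Matrix ι ι ℂ, Q.PosSemidef ∧ (1 - Q).PosSemidef ∧ Q * A = A ∧
      Q.trace = A.rank := by
  set W : Matrix ι ι ℂ := (hA.eigenvectorUnitary : Matrix ι ι ℂ)
  have hW := (hA.eigenvectorUnitary).2
  set e : ι → ℝ := fun i => if hA.eigenvalues i = 0 then 0 else 1
  refine ⟨W * diagonal (fun i => (e i : ℂ)) * Wᴴ, posSemidef_conj_diagonal W ?_, ?_, ?_, ?_⟩
  · intro i; unfold e; split <;> norm_num
  · have : 1 - W * diagonal (fun i => (e i : ℂ)) * Wᴴ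
        = W * diagonal (fun i => ((1 - e i : ℝ) : ℂ)) * Wᴴ := by
      rw [← conj_diagonal_sub_conj_diagonal]
      simpa using (mul_conjTranspose_self_of_mem_unitaryGroup hW).symm
    rw [this]
    refine posSemidef_conj_diagonal W fun i => ?_
    unfold e; split <;> norm_num
  · set ν : ι → ℂ := fun i => (hA.eigenvalues i : ℂ)
    have hAW : A = W * diagonal ν * Wᴴ := hA.eq_conj_diagonal_eigenvalues
    calc W * diagonal (fun i => (e i : ℂ)) * Wᴴ * A
        = W * (diagonal (fun i => (e i : ℂ)) * (Wᴴ * W) * diagonal ν) * Wᴴ := by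
          conv_lhs => rw [hAW]
          simp only [mul_assoc]
      _ = A := by
        rw [conjTranspose_mul_self_of_mem_unitaryGroup hW, mul_one, diagonal_mul_diagonal]
        conv_rhs => rw [hAW]
        congr 3
        ext i
        by_cases h : hA.eigenvalues i = 0 <;> simp [e, ν, h]
  · rw [trace_conj_diagonal hW, hA.rank_eq_card_non_zero_eigs, Fintype.card_subtype]
    simp [e, Finset.sum_ite]

end Matrix

open Matrix

lemma traceNorm_conj_diagonal {n : ℕ} {U : Matrix (Fin n) (Fin n) ℂ}
    (hU : U ∈ unitaryGroup (Fin n) ℂ) (d : Fin n → ℝ) :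
    traceNorm (U * diagonal (fun i => (d i : ℂ)) * Uᴴ) = ∑ i, |d i| := by
  have hsq : (U * diagonal (fun i => (d i : ℂ)) * Uᴴ)ᴴ * (U * diagonal (fun i => (d i : ℂ)) * Uᴴ)
      = U * diagonal (fun i => ((d i ^ 2 : ℝ) : ℂ)) * Uᴴ := by
    simp only [conjTranspose_mul, conjTranspose_conjTranspose, diagonal_conjTranspose, mul_assoc]
    rw [← mul_assoc Uᴴ U, conjTranspose_mul_self_of_mem_unitaryGroup hU, one_mul,
      ← mul_assoc (diagonal _), diagonal_mul_diagonal]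
    congr 3
    ext i
    simp [sq]
  simpa [traceNorm, singVals, Real.sqrt_sq_eq_abs] using
    (isHermitian_conjTranspose_mul_self _).sum_comp_eigenvalues_of_eq_conj_diagonal hU hsq
      Real.sqrt

lemma traceNorm_eq_sum_abs_eigenvalues {n : ℕ} {A : Matrix (Fin n) (Fin n) ℂ}
    (hA : A.IsHermitian) : traceNorm A = ∑ i, |hA.eigenvalues i| := by
  conv_lhs => rw [hA.eq_conj_diagonal_eigenvalues]
  exact traceNorm_conj_diagonal (hA.eigenvectorUnitary).2 _

lemma re_trace_sub_two_mul_le_traceNorm {n : ℕ} {A Q : Matrix (Fin n) (Fin n) ℂ}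
    (hA : A.IsHermitian) (hQ : Q.PosSemidef) (hQ1 : (1 - Q).PosSemidef) :
    A.trace.re - 2 * (Q * A).trace.re ≤ traceNorm A := by
  set V : Matrix (Fin n) (Fin n) ℂ := (hA.eigenvectorUnitary : Matrix (Fin n) (Fin n) ℂ)
  set r := fun i => ((Vᴴ * Q * V) i i).re
  have hr := re_diag_conj_mem_Icc hQ hQ1 (hA.eigenvectorUnitary).2
  have hQA : (Q * A).trace.re = ∑ i, hA.eigenvalues i * r i := by
    conv_lhs => rw [hA.eq_conj_diagonal_eigenvalues]
    exact re_trace_mul_conj_diagonal Q V _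
  rw [hQA, traceNorm_eq_sum_abs_eigenvalues hA, hA.trace_eq_sum_eigenvalues, Complex.re_sum,
    mul_sum, ← sum_sub_distrib]
  refine sum_le_sum fun i _ => ?_
  have hri := hr i
  calc _ = hA.eigenvalues i * (1 - 2 * r i) := by simp; ring
    _ ≤ |hA.eigenvalues i| * |1 - 2 * r i| := by rw [← abs_mul]; exact le_abs_self _
    _ ≤ |hA.eigenvalues i| := by
      refine mul_le_of_le_one_right (abs_nonneg _) (abs_le.mpr ⟨?_, ?_⟩) <;> linarith [hri.1, hri.2]

lemma sum_filter_lt_add_sum_filter_le {n : ℕ} (k : ℕ) (x : Fin n → ℝ) :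
    ∑ i ∈ univ.filter (fun i : Fin n => (i : ℕ) < k), x i
      + ∑ i ∈ univ.filter (fun i : Fin n => k ≤ (i : ℕ)), x i = ∑ i, x i := by
  simpa only [not_lt] using sum_filter_add_sum_filter_not univ (fun i : Fin n => (i : ℕ) < k) x

lemma card_filter_lt_of_le {n k : ℕ} (hkn : k ≤ n) :
    (univ.filter fun i : Fin n => (i : ℕ) < k).card = k := by
  rw [Fin.card_filter_val_lt, min_eq_right hkn]

/-- Ky Fan's maximum principle, scalar form. -/
lemma sum_mul_le_sum_filter_lt {n k : ℕ} (hkn : k ≤ n) {x q : Fin n → ℝ} (hx : Antitone x)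
    (hx0 : ∀ i, 0 ≤ x i) (hq0 : ∀ i, 0 ≤ q i) (hq1 : ∀ i, q i ≤ 1) (hqk : ∑ i, q i ≤ k) :
    ∑ i, x i * q i ≤ ∑ i ∈ univ.filter (fun i : Fin n => (i : ℕ) < k), x i := by
  set t : ℝ := if h : k < n then x ⟨k, h⟩ else 0
  have ht0 : 0 ≤ t := by unfold t; split_ifs <;> simp [hx0]
  have hpoint : ∀ i, x i * q i
      ≤ (if (i : ℕ) < k then x i else 0) + t * (q i - if (i : ℕ) < k then 1 else 0) := by
    intro i
    split_ifs with hik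
    · have hti : t ≤ x i := by
        unfold t
        split_ifs with hkn'
        · exact hx (Fin.mk_le_mk.mpr hik.le)
        · exact hx0 i
      nlinarith [mul_le_mul_of_nonpos_right hti (sub_nonpos.mpr (hq1 i))]
    · have hkn' : k < n := (not_lt.mp hik).trans_lt i.2
      have hit : x i ≤ t := by
        simp only [t, dif_pos hkn']
        exact hx (Fin.mk_le_mk.mpr (not_lt.mp hik))
      nlinarith [mul_le_mul_of_nonneg_right hit (hq0 i)]
  calc ∑ i, x i * q i
      ≤ ∑ i : Fin n,
          ((if (i : ℕ) < k then x i else 0) + t * (q i - if (i : ℕ) < k then 1 else 0)) :=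
        sum_le_sum fun i _ => hpoint i
    _ = ∑ i ∈ univ.filter (fun i : Fin n => (i : ℕ) < k), x i + t * (∑ i, q i - k) := by
        rw [sum_add_distrib, ← mul_sum, sum_sub_distrib, ← sum_filter, sum_boole,
          card_filter_lt_of_le hkn]
    _ ≤ ∑ i ∈ univ.filter (fun i : Fin n => (i : ℕ) < k), x i := by
        nlinarith

lemma re_trace_mul_conj_diagonal_le {n k : ℕ} (hkn : k ≤ n) {Q U : Matrix (Fin n) (Fin n) ℂ}
    (hQ : Q.PosSemidef) (hQ1 : (1 - Q).PosSemidef) (hQk : Q.trace.re ≤ k)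
    (hU : U ∈ unitaryGroup (Fin n) ℂ) {x : Fin n → ℝ} (hx : Antitone x) (hx0 : ∀ i, 0 ≤ x i) :
    (Q * (U * diagonal (fun i => (x i : ℂ)) * Uᴴ)).trace.re
      ≤ ∑ i ∈ univ.filter (fun i : Fin n => (i : ℕ) < k), x i := by
  have hq := re_diag_conj_mem_Icc hQ hQ1 hU
  have hUQU : (Uᴴ * Q * U).trace = Q.trace := by
    rw [trace_mul_cycle, mul_conjTranspose_self_of_mem_unitaryGroup hU, one_mul]
  rw [← hUQU, trace, Complex.re_sum] at hQk
  rw [re_trace_mul_conj_diagonal]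
  exact sum_mul_le_sum_filter_lt hkn hx hx0 (fun i => (hq i).1) (fun i => (hq i).2) hQk

lemma two_mul_sum_filter_le_traceNorm_sub {n k : ℕ} (hkn : k ≤ n) {U : Matrix (Fin n) (Fin n) ℂ}
    (hU : U ∈ unitaryGroup (Fin n) ℂ) {x : Fin n → ℝ} (hx : Antitone x) (hx0 : ∀ i, 0 ≤ x i)
    (hsum : ∑ i, x i = 1) {Y : Matrix (Fin n) (Fin n) ℂ} (hY : IsDensity Y) (hYk : Y.rank ≤ k) :
    2 * ∑ i ∈ univ.filter (fun i : Fin n => k ≤ (i : ℕ)), x i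
      ≤ traceNorm (U * diagonal (fun i => (x i : ℂ)) * Uᴴ - Y) := by
  obtain ⟨Q, hQ, hQ1, hQY, hQk⟩ := hY.1.isHermitian.exists_support_projection
  have hQX := re_trace_mul_conj_diagonal_le hkn hQ hQ1 (by rw [hQk]; exact_mod_cast hYk) hU hx hx0
  have hbound := re_trace_sub_two_mul_le_traceNorm
    ((posSemidef_conj_diagonal U hx0).isHermitian.sub hY.1.isHermitian) hQ hQ1
  rw [mul_sub, trace_sub, trace_sub, hQY, hY.2, trace_conj_diagonal hU, hsum] at hbound
  have hsplit := sum_filter_lt_add_sum_filter_le k x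
  simp only [Complex.ofReal_one, sub_self, Complex.zero_re, Complex.sub_re, Complex.one_re]
    at hbound
  linarith

lemma exists_isDensity_rank_le_traceNorm_sub_eq {n k : ℕ} (hk1 : 1 ≤ k) (hkn : k ≤ n)
    {U : Matrix (Fin n) (Fin n) ℂ} (hU : U ∈ unitaryGroup (Fin n) ℂ) {x : Fin n → ℝ}
    (hx0 : ∀ i, 0 ≤ x i) (hsum : ∑ i, x i = 1) :
    ∃ Y : Matrix (Fin n) (Fin n) ℂ, IsDensity Y ∧ Y.rank ≤ k ∧
      traceNorm (U * diagonal (fun i => (x i : ℂ)) * Uᴴ - Y)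
        = 2 * ∑ i ∈ univ.filter (fun i : Fin n => k ≤ (i : ℕ)), x i := by
  set s := ∑ i ∈ univ.filter (fun i : Fin n => k ≤ (i : ℕ)), x i
  have hs0 : 0 ≤ s := sum_nonneg fun i _ => hx0 i
  have hk0 : (k : ℝ) ≠ 0 := by positivity
  have hsplit := sum_filter_lt_add_sum_filter_le k x
  have hcard : ((univ.filter fun i : Fin n => (i : ℕ) < k).card : ℝ) = k := by
    rw [card_filter_lt_of_le hkn]
  -- keep the `k` largest eigenvalues and spread the discarded mass `s` evenly over them
  set y : Fin n → ℝ := fun i => if (i : ℕ) < k then x i + s / k else 0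
  have hy0 : ∀ i, 0 ≤ y i := fun i => by
    unfold y; split_ifs
    · exact add_nonneg (hx0 i) (by positivity)
    · exact le_rfl
  refine ⟨U * diagonal (fun i => (y i : ℂ)) * Uᴴ, ⟨posSemidef_conj_diagonal U hy0, ?_⟩, ?_, ?_⟩
  · rw [trace_conj_diagonal hU]
    have : ∑ i, y i = 1 := by
      rw [sum_ite, sum_const_zero, add_zero, sum_add_distrib, sum_const, nsmul_eq_mul, hcard]
      field_simp
      linarith
    rw [this, Complex.ofReal_one]
  · rw [rank_conj_unitary hU, rank_diagonal, Fintype.card_subtype, ← card_filter_lt_of_le hkn]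
    refine card_le_card fun i hi => ?_
    simp only [mem_filter, mem_univ, true_and, ne_eq, Complex.ofReal_eq_zero] at hi ⊢
    by_contra hik
    exact hi (if_neg hik)
  · rw [conj_diagonal_sub_conj_diagonal, traceNorm_conj_diagonal hU]
    have habs : ∀ i, |x i - y i| = if (i : ℕ) < k then s / k else x i := fun i => by
      unfold y; split_ifs
      · rw [show x i - (x i + s / k) = -(s / k) by ring, abs_neg, abs_of_nonneg (by positivity)]
      · rw [sub_zero, abs_of_nonneg (hx0 i)]
    simp only [habs, sum_ite, sum_const, nsmul_eq_mul, hcard, not_lt]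
    field_simp
    ring

theorem stmt_2 (n k : ℕ) (hk1 : 1 ≤ k) (hkn : k ≤ n)
    (X : Matrix (Fin n) (Fin n) ℂ) (hX : IsDensity X)
    (x : Fin n → ℝ) (hxsort : ∀ i j : Fin n, i ≤ j → x j ≤ x i) (hxnn : ∀ i, 0 ≤ x i)
    (U : Matrix (Fin n) (Fin n) ℂ) (hU : U ∈ Matrix.unitaryGroup (Fin n) ℂ)
    (hXU : X = U * Matrix.diagonal (fun i => (x i : ℂ)) * Uᴴ) :
    distToLowRank traceNorm k X
      = 2 * ∑ j ∈ Finset.univ.filter (fun j : Fin n => k ≤ (j : ℕ)), x j := by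
  have hsum : ∑ i, x i = 1 := by
    have htr := hX.2
    rwa [hXU, trace_conj_diagonal hU, Complex.ofReal_eq_one] at htr
  subst hXU
  refine IsLeast.csInf_eq ⟨?_, ?_⟩
  · obtain ⟨Y, hY, hYk, hdist⟩ := exists_isDensity_rank_le_traceNorm_sub_eq hk1 hkn hU hxnn hsum
    exact ⟨Y, hY, hYk, hdist.symm⟩
  · rintro t ⟨Y, hY, hYk, rfl⟩
    exact two_mul_sum_filter_le_traceNorm_sub hkn hU hxsort hxnn hsum hY hYk
end

section
/- Suppose 1 ≤ k ≤ n and X is an n×n density matrix. Then the trace-norm distance from X to the set D_{n,k} of density matrices of rank at most k satisfies d(X, D_{n,k}) ≤ d((1/n)·I_n, D_{n,k}) = 2(n−k)/n. -/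
open Matrix BigOperators Finset
open scoped ComplexOrder

/-! A state and its rank are unitarily invariant, so in an eigenbasis everything reduces to
probability vectors, and the trace norm of `U diag(r) U*` is `∑ |rᵢ|`. Given a state with spectrum
`p`, keeping its `k` largest eigenvalues and renormalising gives a state of rank `≤ k` at distance
`2 (1 - s)`, where the retained weight `s` is at least the average `k / n`. Conversely, in the
eigenbasis of a state `Y` of rank `≤ k` the maximally mixed state stays diagonal, and the `n - k`
(or more) zero eigenvalues of `Y` already contribute `(n - k) / n` to `‖I/n - Y‖₁`, while the
others contribute at least `1 - k / n`. -/

open Unitary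

namespace Matrix

variable {ι 𝕜 : Type*} [Fintype ι] [DecidableEq ι] [RCLike 𝕜]

theorem charpoly_conjStarAlgAut (U : unitaryGroup ι 𝕜) (A : Matrix ι ι 𝕜) :
    (conjStarAlgAut 𝕜 _ U A).charpoly = A.charpoly := by
  rw [conjStarAlgAut_apply, charpoly_mul_comm, ← Matrix.mul_assoc, Unitary.coe_star_mul_self,
    Matrix.one_mul]

theorem trace_conjStarAlgAut (U : unitaryGroup ι 𝕜) (A : Matrix ι ι 𝕜) :
    (conjStarAlgAut 𝕜 _ U A).trace = A.trace := by
  rw [conjStarAlgAut_apply, trace_mul_cycle, Unitary.coe_star_mul_self, Matrix.one_mul]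

theorem rank_conjStarAlgAut (U : unitaryGroup ι 𝕜) (A : Matrix ι ι 𝕜) :
    (conjStarAlgAut 𝕜 _ U A).rank = A.rank := by
  rw [conjStarAlgAut_apply, ← coe_star,
    rank_mul_eq_left_of_isUnit_det _ _ ((isUnit_iff_isUnit_det _).mp Unitary.isUnit_coe),
    rank_mul_eq_right_of_isUnit_det _ _ ((isUnit_iff_isUnit_det _).mp Unitary.isUnit_coe)]

theorem posSemidef_conjStarAlgAut_iff (U : unitaryGroup ι 𝕜) (A : Matrix ι ι 𝕜) :
    (conjStarAlgAut 𝕜 _ U A).PosSemidef ↔ A.PosSemidef := by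
  rw [conjStarAlgAut_apply, Unitary.isUnit_coe.posSemidef_star_right_conjugate_iff]

theorem IsHermitian.sum_comp_eigenvalues_eq {H : Matrix ι ι 𝕜} (hH : H.IsHermitian)
    (U : unitaryGroup ι 𝕜) (r : ι → ℝ)
    (hHr : H = conjStarAlgAut 𝕜 _ U (diagonal (RCLike.ofReal ∘ r))) (f : ℝ → ℝ) :
    ∑ i, f (hH.eigenvalues i) = ∑ i, f (r i) := by
  have hroots : univ.val.map (RCLike.ofReal ∘ hH.eigenvalues) =
      univ.val.map (RCLike.ofReal ∘ r : ι → 𝕜) := by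
    rw [← hH.roots_charpoly_eq_eigenvalues, hHr, charpoly_conjStarAlgAut, charpoly_diagonal,
      Finset.prod_eq_multiset_prod]
    simpa only [Multiset.map_map, Function.comp_def] using
      Polynomial.roots_multiset_prod_X_sub_C (univ.val.map (RCLike.ofReal ∘ r : ι → 𝕜))
  have hvals : univ.val.map hH.eigenvalues = univ.val.map r := by
    simpa [Multiset.map_map] using congrArg (Multiset.map RCLike.re) hroots
  simpa only [Multiset.map_map, Function.comp_def, ← Finset.sum_eq_multiset_sum] using
    congrArg (fun s => (s.map f).sum) hvals

end Matrix

section ProbabilityVector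

variable {ι : Type*} [Fintype ι]

theorem exists_card_eq_forall_notMem_le [DecidableEq ι] {α : Type*} [LinearOrder α] (f : ι → α)
    {k : ℕ} (hk : k ≤ Fintype.card ι) : ∃ S : Finset ι, #S = k ∧ ∀ i ∈ S, ∀ j ∉ S, f j ≤ f i := by
  induction k with
  | zero => exact ⟨∅, rfl, by simp⟩
  | succ m ih =>
    obtain ⟨S, hcard, hS⟩ := ih (Nat.le_of_succ_le hk)
    have hne : Sᶜ.Nonempty := by
      rw [← Finset.card_pos, Finset.card_compl, hcard]
      omega
    obtain ⟨j, hjS, hjmax⟩ := Finset.exists_max_image Sᶜ f hne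
    rw [Finset.mem_compl] at hjS
    refine ⟨insert j S, by rw [Finset.card_insert_of_notMem hjS, hcard], ?_⟩
    intro i hi l hl
    rw [Finset.mem_insert, not_or] at hl
    rcases Finset.mem_insert.mp hi with rfl | hiS
    · exact hjmax l (Finset.mem_compl.mpr hl.2)
    · exact hS i hiS l hl.2

theorem card_mul_sum_le_card_mul_sum_of_forall_le [DecidableEq ι] {R : Type*} [CommRing R]
    [LinearOrder R] [IsStrictOrderedRing R] {f : ι → R} {S : Finset ι}
    (hS : ∀ i ∈ S, ∀ j ∉ S, f j ≤ f i) :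
    #S * ∑ i, f i ≤ Fintype.card ι * ∑ i ∈ S, f i := by
  have hexpand : ∑ i ∈ S, ∑ j ∈ Sᶜ, (f i - f j)
      = #Sᶜ * ∑ i ∈ S, f i - #S * ∑ j ∈ Sᶜ, f j := by
    simp only [Finset.sum_sub_distrib, Finset.sum_const, nsmul_eq_mul, Finset.mul_sum]
  have hpairs : 0 ≤ #Sᶜ * ∑ i ∈ S, f i - #S * ∑ j ∈ Sᶜ, f j := hexpand ▸
    Finset.sum_nonneg fun i hi => Finset.sum_nonneg fun j hj =>
      sub_nonneg.mpr (hS i hi j (Finset.mem_compl.mp hj))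
  have hcard : (Fintype.card ι : R) = #S + #Sᶜ := by
    rw [← Finset.card_add_card_compl S]
    push_cast
    rfl
  rw [← Finset.sum_add_sum_compl S, hcard]
  linear_combination hpairs

theorem exists_sparse_mem_stdSimplex_sum_abs_sub_le [DecidableEq ι] {p : ι → ℝ}
    (hp : p ∈ stdSimplex ℝ ι) {k : ℕ} (hk1 : 1 ≤ k) (hk : k ≤ Fintype.card ι) :
    ∃ q ∈ stdSimplex ℝ ι, #{i | q i ≠ 0} ≤ k ∧
      ∑ i, |p i - q i| ≤ 2 * ((Fintype.card ι : ℝ) - k) / Fintype.card ι := by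
  obtain ⟨hp0, hp1⟩ := hp
  obtain ⟨S, hScard, hStop⟩ := exists_card_eq_forall_notMem_le p hk
  set s := ∑ i ∈ S, p i
  have hn : (0 : ℝ) < Fintype.card ι := Nat.cast_pos.mpr (Nat.lt_of_lt_of_le hk1 hk)
  have hks : (k : ℝ) / Fintype.card ι ≤ s := by
    rw [div_le_iff₀ hn, mul_comm, ← hScard]
    simpa [hp1] using card_mul_sum_le_card_mul_sum_of_forall_le hStop
  have hs0 : 0 < s := (div_pos (by exact_mod_cast hk1) hn).trans_le hks
  have hs1 : s ≤ 1 := hp1 ▸ Finset.sum_le_univ_sum_of_nonneg hp0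
  refine ⟨fun i => if i ∈ S then p i / s else 0, ⟨fun i => ?_, ?_⟩, ?_, ?_⟩
  · dsimp only
    split_ifs
    exacts [div_nonneg (hp0 i) hs0.le, le_rfl]
  · rw [Finset.sum_ite_mem, Finset.univ_inter, ← Finset.sum_div, div_self hs0.ne']
  · refine (Finset.card_le_card fun i hi => ?_).trans hScard.le
    by_contra hiS
    simp [hiS] at hi
  · have hin : ∀ i ∈ S, |p i - p i / s| = p i / s - p i := fun i _ => by
      rw [abs_sub_comm, abs_of_nonneg (sub_nonneg.mpr (le_div_self (hp0 i) hs0 hs1))]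
    have hout : ∑ i ∈ Sᶜ, p i = 1 - s := by
      rw [← hp1, ← Finset.sum_add_sum_compl S]
      ring
    calc ∑ i, |p i - if i ∈ S then p i / s else 0|
        = ∑ i ∈ S, (p i / s - p i) + ∑ i ∈ Sᶜ, p i := by
          rw [← Finset.sum_add_sum_compl S]
          congr 1 <;> refine Finset.sum_congr rfl fun i hi => ?_
          · rw [if_pos hi, hin i hi]
          · rw [if_neg (Finset.mem_compl.mp hi), sub_zero, abs_of_nonneg (hp0 i)]
      _ = 2 * (1 - s) := by
          rw [Finset.sum_sub_distrib, ← Finset.sum_div, div_self hs0.ne', hout]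
          ring
      _ ≤ 2 * ((Fintype.card ι : ℝ) - k) / Fintype.card ι := by
          rw [le_div_iff₀ hn]
          linarith [(div_le_iff₀ hn).mp hks]

theorem le_sum_abs_inv_card_sub_of_card_support_le {q : ι → ℝ} (hq : ∑ i, q i = 1) {k : ℕ}
    (hk : #{i | q i ≠ 0} ≤ k) :
    2 * ((Fintype.card ι : ℝ) - k) / Fintype.card ι ≤ ∑ i, |(Fintype.card ι : ℝ)⁻¹ - q i| := by
  classical
  set c := (Fintype.card ι : ℝ)⁻¹
  have hn : (0 : ℝ) < Fintype.card ι := by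
    obtain ⟨i, -⟩ := Finset.exists_ne_zero_of_sum_ne_zero (hq ▸ one_ne_zero)
    exact_mod_cast Fintype.card_pos_iff.mpr ⟨i⟩
  have hterm : ∀ i, q i + (if q i = 0 then c else -c) ≤ |c - q i| := fun i => by
    split_ifs with h
    · rw [h, sub_zero, zero_add, abs_of_pos (inv_pos.mpr hn)]
    · rw [abs_sub_comm]
      exact le_abs_self _
  have hcard : (#{i | q i = 0} : ℝ) + #{i | q i ≠ 0} = Fintype.card ι := by
    exact_mod_cast Finset.card_filter_add_card_filter_not _
  have hk' : (#{i | q i ≠ 0} : ℝ) ≤ k := by exact_mod_cast hk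
  calc 2 * ((Fintype.card ι : ℝ) - k) / Fintype.card ι
      ≤ 1 + c * #{i | q i = 0} - c * #{i | q i ≠ 0} := by
        rw [div_le_iff₀ hn]
        have hcn : c * Fintype.card ι = 1 := inv_mul_cancel₀ hn.ne'
        nlinarith
    _ = ∑ i, (q i + if q i = 0 then c else -c) := by
        rw [Finset.sum_add_distrib, hq, Finset.sum_ite, Finset.sum_const, Finset.sum_const]
        simp only [nsmul_eq_mul]
        ring
    _ ≤ ∑ i, |c - q i| := Finset.sum_le_sum fun i _ => hterm i

end ProbabilityVector

section DensityMatrix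

variable {n : ℕ}

theorem traceNorm_conjStarAlgAut_diagonal (U : unitaryGroup (Fin n) ℂ) (r : Fin n → ℝ) :
    traceNorm (conjStarAlgAut ℂ _ U (diagonal (RCLike.ofReal ∘ r))) = ∑ i, |r i| := by
  set D : Matrix (Fin n) (Fin n) ℂ := diagonal (RCLike.ofReal ∘ r)
  set A := conjStarAlgAut ℂ _ U D
  have hD : Dᴴ = D := by simp [D, diagonal_conjTranspose]
  have hAA : Aᴴ * A = conjStarAlgAut ℂ _ U (diagonal (RCLike.ofReal ∘ fun i => r i * r i)) := by
    rw [← star_eq_conjTranspose, ← map_star, ← map_mul, star_eq_conjTranspose, hD,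
      diagonal_mul_diagonal]
    simp [Function.comp_def]
  calc traceNorm A = ∑ i, √((isHermitian_conjTranspose_mul_self A).eigenvalues i) := rfl
    _ = ∑ i, √(r i * r i) :=
      (isHermitian_conjTranspose_mul_self A).sum_comp_eigenvalues_eq U _ hAA _
    _ = ∑ i, |r i| := by simp only [Real.sqrt_mul_self_eq_abs]

theorem traceNorm_conjStarAlgAut_diagonal_sub (U : unitaryGroup (Fin n) ℂ) (r s : Fin n → ℝ) :
    traceNorm (conjStarAlgAut ℂ _ U (diagonal (RCLike.ofReal ∘ r)) -
      conjStarAlgAut ℂ _ U (diagonal (RCLike.ofReal ∘ s))) = ∑ i, |r i - s i| := by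
  have hsub : (fun i => (RCLike.ofReal ∘ r) i - (RCLike.ofReal ∘ s) i : Fin n → ℂ) =
      RCLike.ofReal ∘ (r - s) := by
    ext
    simp
  rw [← map_sub, diagonal_sub, hsub, traceNorm_conjStarAlgAut_diagonal]
  rfl

theorem isDensity_conjStarAlgAut_diagonal_iff (U : unitaryGroup (Fin n) ℂ) (d : Fin n → ℝ) :
    IsDensity (conjStarAlgAut ℂ _ U (diagonal (RCLike.ofReal ∘ d))) ↔
      d ∈ stdSimplex ℝ (Fin n) := by
  show _ ↔ (∀ i, 0 ≤ d i) ∧ ∑ i, d i = 1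
  rw [IsDensity, posSemidef_conjStarAlgAut_iff, trace_conjStarAlgAut, posSemidef_diagonal_iff,
    trace_diagonal]
  simp only [Function.comp_apply, RCLike.ofReal_nonneg, ← RCLike.ofReal_sum]
  rw [← RCLike.ofReal_one, RCLike.ofReal_inj]

theorem rank_conjStarAlgAut_diagonal (U : unitaryGroup (Fin n) ℂ) (d : Fin n → ℝ) :
    (conjStarAlgAut ℂ _ U (diagonal (RCLike.ofReal ∘ d))).rank = #{i | d i ≠ 0} := by
  rw [rank_conjStarAlgAut, rank_diagonal, Fintype.card_subtype]
  simp

theorem IsDensity.eigenvalues_mem_stdSimplex {X : Matrix (Fin n) (Fin n) ℂ} (hX : IsDensity X) :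
    hX.1.1.eigenvalues ∈ stdSimplex ℝ (Fin n) := by
  rw [← isDensity_conjStarAlgAut_diagonal_iff hX.1.1.eigenvectorUnitary, ← hX.1.1.spectral_theorem]
  exact hX

theorem conjStarAlgAut_diagonal_const (U : unitaryGroup (Fin n) ℂ) (c : ℝ) :
    conjStarAlgAut ℂ _ U (diagonal (RCLike.ofReal ∘ fun _ => c)) = (c : ℂ) • 1 := by
  change conjStarAlgAut ℂ _ U (diagonal fun _ => (c : ℂ)) = _
  rw [← smul_one_eq_diagonal, map_smul, map_one]

theorem isDensity_inv_smul_one (hn : 0 < n) :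
    IsDensity ((1 / (n : ℂ)) • (1 : Matrix (Fin n) (Fin n) ℂ)) := by
  have hc : ((1 / (n : ℂ)) • 1 : Matrix (Fin n) (Fin n) ℂ) =
      conjStarAlgAut ℂ _ 1 (diagonal (RCLike.ofReal ∘ fun _ => (n : ℝ)⁻¹)) := by
    rw [conjStarAlgAut_diagonal_const, one_div, Complex.ofReal_inv, Complex.ofReal_natCast]
  rw [hc, isDensity_conjStarAlgAut_diagonal_iff]
  refine ⟨fun _ => by positivity, ?_⟩
  simp [hn.ne']

theorem traceNorm_nonneg (A : Matrix (Fin n) (Fin n) ℂ) : 0 ≤ traceNorm A :=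
  Finset.sum_nonneg fun _ _ => Real.sqrt_nonneg _

theorem distToLowRank_le_traceNorm_sub {k : ℕ} {X Y : Matrix (Fin n) (Fin n) ℂ}
    (hY : IsDensity Y) (hYk : Y.rank ≤ k) : distToLowRank traceNorm k X ≤ traceNorm (X - Y) :=
  csInf_le ⟨0, by rintro _ ⟨Z, -, -, rfl⟩; exact traceNorm_nonneg _⟩ ⟨Y, hY, hYk, rfl⟩

theorem IsDensity.exists_rank_le_traceNorm_sub_le {X : Matrix (Fin n) (Fin n) ℂ}
    (hX : IsDensity X) {k : ℕ} (hk1 : 1 ≤ k) (hkn : k ≤ n) :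
    ∃ Y, IsDensity Y ∧ Y.rank ≤ k ∧ traceNorm (X - Y) ≤ 2 * ((n : ℝ) - k) / n := by
  set U := hX.1.1.eigenvectorUnitary
  obtain ⟨q, hq, hqk, hpq⟩ := exists_sparse_mem_stdSimplex_sum_abs_sub_le
    hX.eigenvalues_mem_stdSimplex hk1 (by simpa using hkn)
  refine ⟨conjStarAlgAut ℂ _ U (diagonal (RCLike.ofReal ∘ q)),
    (isDensity_conjStarAlgAut_diagonal_iff U q).mpr hq,
    (rank_conjStarAlgAut_diagonal U q).trans_le hqk, ?_⟩
  rw [hX.1.1.spectral_theorem, traceNorm_conjStarAlgAut_diagonal_sub]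
  simpa using hpq

theorem le_traceNorm_inv_smul_one_sub {Y : Matrix (Fin n) (Fin n) ℂ} (hY : IsDensity Y) {k : ℕ}
    (hYk : Y.rank ≤ k) :
    2 * ((n : ℝ) - k) / n ≤ traceNorm ((1 / (n : ℂ)) • 1 - Y) := by
  set U := hY.1.1.eigenvectorUnitary
  have hrank : #{i | hY.1.1.eigenvalues i ≠ 0} ≤ k := by
    rwa [hY.1.1.rank_eq_card_non_zero_eigs, Fintype.card_subtype] at hYk
  have hmixed : (1 / (n : ℂ)) • (1 : Matrix (Fin n) (Fin n) ℂ) =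
      conjStarAlgAut ℂ _ U (diagonal (RCLike.ofReal ∘ fun _ => (n : ℝ)⁻¹)) := by
    rw [conjStarAlgAut_diagonal_const, one_div, Complex.ofReal_inv, Complex.ofReal_natCast]
  rw [hmixed, hY.1.1.spectral_theorem, traceNorm_conjStarAlgAut_diagonal_sub]
  simpa using le_sum_abs_inv_card_sub_of_card_support_le hY.eigenvalues_mem_stdSimplex.2 hrank

end DensityMatrix

theorem stmt_3 (n k : ℕ) (hk1 : 1 ≤ k) (hkn : k ≤ n)
    (X : Matrix (Fin n) (Fin n) ℂ) (hX : IsDensity X) :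
    distToLowRank traceNorm k X
        ≤ distToLowRank traceNorm k ((1 / (n : ℂ)) • (1 : Matrix (Fin n) (Fin n) ℂ)) ∧
      distToLowRank traceNorm k ((1 / (n : ℂ)) • (1 : Matrix (Fin n) (Fin n) ℂ))
        = 2 * ((n : ℝ) - k) / n := by
  have hdist_le (W : Matrix (Fin n) (Fin n) ℂ) (hW : IsDensity W) :
      distToLowRank traceNorm k W ≤ 2 * ((n : ℝ) - k) / n := by
    obtain ⟨Y, hY, hYk, hWY⟩ := hW.exists_rank_le_traceNorm_sub_le hk1 hkn
    exact (distToLowRank_le_traceNorm_sub hY hYk).trans hWY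
  have hmixed := isDensity_inv_smul_one (Nat.lt_of_lt_of_le hk1 hkn)
  have hdist_eq : distToLowRank traceNorm k ((1 / (n : ℂ)) • (1 : Matrix (Fin n) (Fin n) ℂ))
      = 2 * ((n : ℝ) - k) / n := by
    refine (hdist_le _ hmixed).antisymm (le_csInf ?_ ?_)
    · obtain ⟨Y, hY, hYk, -⟩ := hmixed.exists_rank_le_traceNorm_sub_le hk1 hkn
      exact ⟨_, Y, hY, hYk, rfl⟩
    · rintro _ ⟨Y, hY, hYk, rfl⟩
      exact le_traceNorm_inv_smul_one_sub hY hYk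
  exact ⟨(hdist_le X hX).trans_eq hdist_eq.symm, hdist_eq⟩
end

section
/- Suppose k ∈ {1, 2, 3}, ‖·‖ is any unitary similarity invariant norm on 3×3 complex matrices, and X is a 3×3 density matrix. Then d(X, D_{3,k}) ≤ d((1/3)·I_3, D_{3,k}). -/
open Matrix BigOperators Finset
open scoped ComplexOrder

/-!
Diagonalise `X = U diag(x) U*` and a competitor `Z = V diag(z) V*`, with `x, z` in the standard
simplex and `rank Z = #supp z`. By unitary similarity invariance, `p d := N (diag d)` is a
permutation-invariant seminorm on `ℝ³`, and `N (I/3 - Z) = p (1/3 - z)`. So it suffices to find `y`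
in the simplex with `#supp y ≤ k` and `p (x - y) ≤ p (1/3 - z)`, and to take `Y = U diag(y) U*`.
After sorting `x` and `z` increasingly: for `k = 1` we have `z = e₃` and take `y = e₃`; for `k = 2`
we have `z₁ = 0` and take `y` spreading `x₁` evenly over the other two entries. In both cases
`x - y` is an explicit convex combination of signed permutations of `1/3 - z`. For `k ≥ 3`, `y = x`.
-/

lemma Seminorm.map_convexComb₃_le {E : Type*} [AddCommGroup E] [Module ℝ E] (p : Seminorm ℝ E)
    {u v w : E} {a b c M : ℝ} (ha : 0 ≤ a) (hb : 0 ≤ b) (hc : 0 ≤ c) (habc : a + b + c = 1)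
    (hu : p u ≤ M) (hv : p v ≤ M) (hw : p w ≤ M) : p (a • u + b • v + c • w) ≤ M :=
  calc p (a • u + b • v + c • w) ≤ a * p u + b * p v + c * p w := by
        refine (map_add_le_add p _ _).trans ?_
        grw [map_add_le_add p]
        simp only [map_smul_eq_mul, Real.norm_of_nonneg ha, Real.norm_of_nonneg hb,
          Real.norm_of_nonneg hc, le_refl]
    _ ≤ a * M + b * M + c * M := by gcongr
    _ = M := by rw [← add_mul, ← add_mul, habc, one_mul]

lemma comp_perm_mem_stdSimplex {ι : Type*} [Fintype ι] {v : ι → ℝ} (hv : v ∈ stdSimplex ℝ ι)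
    (σ : Equiv.Perm ι) : v ∘ σ ∈ stdSimplex ℝ ι :=
  ⟨fun i => hv.1 (σ i), by simpa only [Function.comp_apply, Equiv.sum_comp] using hv.2⟩

section Support

variable {ι R : Type*} [Fintype ι] [Zero R] [DecidableEq R]

lemma card_ne_zero_comp_perm (v : ι → R) (σ : Equiv.Perm ι) :
    Fintype.card {i // (v ∘ σ) i ≠ 0} = Fintype.card {i // v i ≠ 0} :=
  Fintype.card_congr (σ.subtypeEquiv fun _ => Iff.rfl)

lemma card_ne_zero_le_of_subset {v : ι → R} {s : Finset ι} (hs : ∀ i, v i ≠ 0 → i ∈ s) :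
    Fintype.card {i // v i ≠ 0} ≤ #s := by
  classical
  rw [Fintype.card_subtype]
  exact card_le_card fun i hi => hs i (mem_filter.1 hi).2

lemma card_ne_zero_single_le [DecidableEq ι] (j : ι) (a : R) :
    Fintype.card {i // (Pi.single j a : ι → R) i ≠ 0} ≤ 1 :=
  (card_ne_zero_le_of_subset (s := {j}) fun i hi => mem_singleton.2 <| by
    by_contra h
    exact hi (Pi.single_eq_of_ne (M := fun _ => R) h a)).trans_eq (card_singleton j)

end Support

lemma Monotone.eq_zero_of_card_ne_zero_lt {n : ℕ} {z : Fin n → ℝ} (hzm : Monotone z)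
    (hz : ∀ i, 0 ≤ z i) {i : Fin n} (hi : Fintype.card {j // z j ≠ 0} < n - i) : z i = 0 := by
  classical
  by_contra hzi
  refine hi.not_ge ?_
  rw [← Fin.card_Ici, Fintype.card_subtype]
  exact card_le_card fun j hj =>
    mem_filter.2 ⟨mem_univ j, ((lt_of_le_of_ne (hz i) (Ne.symm hzi)).trans_le
      (hzm (mem_Ici.1 hj))).ne'⟩

section SymmetricGauge

variable (p : Seminorm ℝ (Fin 3 → ℝ)) (hp : ∀ (σ : Equiv.Perm (Fin 3)) d, p (d ∘ σ) = p d)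
include hp

lemma map_sub_vertex_le {x : Fin 3 → ℝ} (hx : x ∈ stdSimplex ℝ (Fin 3)) (hxm : Monotone x) :
    p (x - Pi.single 2 1) ≤ p ((fun _ => 1 / 3) - Pi.single 2 1) := by
  set u : Fin 3 → ℝ := (fun _ => 1 / 3) - Pi.single 2 1
  have hsum : x 0 + x 1 + x 2 = 1 := by simpa [Fin.sum_univ_three] using hx.2
  have hx01 : x 0 ≤ x 1 := hxm (by decide)
  have hx12 : x 1 ≤ x 2 := hxm (by decide)
  have hcomb : x - Pi.single 2 1 = ((1 + 3 * x 0) / 2) • u + ((x 2 - x 1) / 2) • -u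
      + (x 1 - x 0) • -(u ∘ Equiv.swap 1 2) := by
    funext i
    fin_cases i <;> simp [u, Equiv.swap_apply_def] <;> linarith
  rw [hcomb]
  refine p.map_convexComb₃_le (by linarith [hx.1 0]) (by linarith) (by linarith) (by linarith)
    le_rfl (map_neg_eq_map p u).le ?_
  rw [map_neg_eq_map, hp]

lemma map_sub_edge_le {x z : Fin 3 → ℝ} (hx : x ∈ stdSimplex ℝ (Fin 3)) (hx0 : ∀ i, x 0 ≤ x i)
    (hz : z ∈ stdSimplex ℝ (Fin 3)) (hz0 : z 0 = 0) :
    p (x - ![0, x 1 + x 0 / 2, x 2 + x 0 / 2]) ≤ p ((fun _ => 1 / 3) - z) := by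
  set u : Fin 3 → ℝ := (fun _ => 1 / 3) - z
  have hxsum : x 0 + x 1 + x 2 = 1 := by simpa [Fin.sum_univ_three] using hx.2
  have hzsum : z 1 + z 2 = 1 := by simpa [Fin.sum_univ_three, hz0] using hz.2
  have hcomb : x - ![0, x 1 + x 0 / 2, x 2 + x 0 / 2]
      = (1 / 2 : ℝ) • u + (3 * x 0 / 2) • (u ∘ Equiv.swap 1 2) + ((1 - 3 * x 0) / 2) • -u := by
    funext i
    fin_cases i <;> simp [u, hz0, Equiv.swap_apply_def]
    · ring
    all_goals linear_combination (3 * x 0 / 2) * hzsum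
  rw [hcomb]
  refine p.map_convexComb₃_le (by norm_num) (by linarith [hx.1 0]) ?_ (by ring)
    le_rfl (hp _ _).le (map_neg_eq_map p u).le
  linarith [hx0 1, hx0 2]

lemma exists_sparse_le_of_monotone {k : ℕ} {x z : Fin 3 → ℝ} (hx : x ∈ stdSimplex ℝ (Fin 3))
    (hxm : Monotone x) (hz : z ∈ stdSimplex ℝ (Fin 3)) (hzm : Monotone z)
    (hzk : Fintype.card {i // z i ≠ 0} ≤ k) :
    ∃ y ∈ stdSimplex ℝ (Fin 3),
      Fintype.card {i // y i ≠ 0} ≤ k ∧ p (x - y) ≤ p ((fun _ => 1 / 3) - z) := by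
  have hz0 (hk : k < 3) : z 0 = 0 :=
    hzm.eq_zero_of_card_ne_zero_lt hz.1 (by simpa using hzk.trans_lt hk)
  have hz1 (hk : k < 2) : z 1 = 0 :=
    hzm.eq_zero_of_card_ne_zero_lt hz.1 (by simpa using hzk.trans_lt hk)
  have hz2 (hk : k < 1) : z 2 = 0 :=
    hzm.eq_zero_of_card_ne_zero_lt hz.1 (by simpa using hzk.trans_lt hk)
  have hzsum : z 0 + z 1 + z 2 = 1 := by simpa [Fin.sum_univ_three] using hz.2
  obtain rfl | rfl | rfl | hk : k = 0 ∨ k = 1 ∨ k = 2 ∨ 3 ≤ k := by omega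
  · linarith [hz0 (by norm_num), hz1 (by norm_num), hz2 (by norm_num)]
  · have hz_single : z = Pi.single 2 1 := by
      funext i
      fin_cases i
      · simpa using hz0 (by norm_num)
      · simpa using hz1 (by norm_num)
      · simp only [Fin.reduceFinMk, Fin.isValue, Pi.single_eq_same]
        linarith [hz0 (by norm_num), hz1 (by norm_num)]
    exact ⟨Pi.single 2 1, single_mem_stdSimplex ℝ 2, card_ne_zero_single_le 2 1,
      hz_single ▸ map_sub_vertex_le p hp hx hxm⟩
  · have hx0 : ∀ i, x 0 ≤ x i := fun i => hxm (Fin.zero_le i)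
    refine ⟨![0, x 1 + x 0 / 2, x 2 + x 0 / 2], ⟨?_, ?_⟩,
      card_ne_zero_le_of_subset (s := {1, 2}) ?_, map_sub_edge_le p hp hx hx0 hz (hz0 (by simp))⟩
    · intro i
      fin_cases i <;> simp <;> linarith [hx.1 0, hx.1 1, hx.1 2]
    · simp only [Fin.sum_univ_three, cons_val_zero, cons_val_one, zero_add, Matrix.cons_val]
      linarith [show x 0 + x 1 + x 2 = 1 by simpa [Fin.sum_univ_three] using hx.2]
    · intro i hi
      fin_cases i <;> simp_all
  · exact ⟨x, hx, (Fintype.card_subtype_le _).trans (by simpa using hk), by simp⟩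

lemma exists_sparse_le {k : ℕ} {x z : Fin 3 → ℝ} (hx : x ∈ stdSimplex ℝ (Fin 3))
    (hz : z ∈ stdSimplex ℝ (Fin 3)) (hzk : Fintype.card {i // z i ≠ 0} ≤ k) :
    ∃ y ∈ stdSimplex ℝ (Fin 3),
      Fintype.card {i // y i ≠ 0} ≤ k ∧ p (x - y) ≤ p ((fun _ => 1 / 3) - z) := by
  set σ := Tuple.sort x
  set τ := Tuple.sort z
  obtain ⟨y, hy, hyk, hle⟩ := exists_sparse_le_of_monotone p hp (k := k)
    (comp_perm_mem_stdSimplex hx σ) (Tuple.monotone_sort x)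
    (comp_perm_mem_stdSimplex hz τ) (Tuple.monotone_sort z) (by rwa [card_ne_zero_comp_perm])
  refine ⟨y ∘ σ.symm, comp_perm_mem_stdSimplex hy σ.symm, by rwa [card_ne_zero_comp_perm], ?_⟩
  calc p (x - y ∘ σ.symm) = p (x ∘ σ - y) := by
        rw [← hp σ]
        congr 1
        funext i
        simp
    _ ≤ p ((fun _ => 1 / 3) - z ∘ τ) := hle
    _ = p ((fun _ => 1 / 3) - z) := by rw [← hp τ ((fun _ => 1 / 3) - z)]; rfl

end SymmetricGauge

section UnitarilyInvariant

variable {ι : Type*} [Fintype ι] [DecidableEq ι]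

lemma permMatrix_mem_unitaryGroup (σ : Equiv.Perm ι) : σ.permMatrix ℂ ∈ unitaryGroup ι ℂ := by
  rw [mem_unitaryGroup_iff', star_eq_conjTranspose, conjTranspose_permMatrix, ← permMatrix_mul,
    mul_inv_cancel, permMatrix_one]

lemma diagonal_comp_perm {R : Type*} [NonAssocSemiring R] (d : ι → R) (σ : Equiv.Perm ι) :
    diagonal (d ∘ σ) = σ.permMatrix R * diagonal d * (σ⁻¹).permMatrix R := by
  rw [PEquiv.toMatrix_toPEquiv_mul, PEquiv.mul_toMatrix_toPEquiv, Equiv.Perm.inv_def,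
    Equiv.symm_symm, submatrix_submatrix, Function.id_comp, Function.comp_id,
    submatrix_diagonal_equiv]

def conjDiagonal (U : Matrix ι ι ℂ) (d : ι → ℝ) : Matrix ι ι ℂ :=
  U * diagonal (fun i => (d i : ℂ)) * Uᴴ

lemma conjDiagonal_sub (U : Matrix ι ι ℂ) (a b : ι → ℝ) :
    conjDiagonal U a - conjDiagonal U b = conjDiagonal U (a - b) := by
  simp only [conjDiagonal, ← Matrix.sub_mul, ← Matrix.mul_sub, diagonal_sub, Pi.sub_apply,
    Complex.ofReal_sub]

lemma conjDiagonal_const {U : Matrix ι ι ℂ} (hU : U ∈ unitaryGroup ι ℂ) (c : ℝ) :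
    conjDiagonal U (fun _ => c) = (c : ℂ) • 1 := by
  rw [conjDiagonal, ← smul_one_eq_diagonal, Matrix.mul_smul, Matrix.mul_one, Matrix.smul_mul,
    ← star_eq_conjTranspose, mem_unitaryGroup_iff.1 hU]

lemma rank_conjDiagonal {U : Matrix ι ι ℂ} (hU : U ∈ unitaryGroup ι ℂ) (d : ι → ℝ) :
    (conjDiagonal U d).rank = Fintype.card {i // d i ≠ 0} := by
  have hUstar : Uᴴ ∈ unitaryGroup ι ℂ := by
    rw [← star_eq_conjTranspose]; exact Unitary.star_mem hU
  rw [conjDiagonal, rank_mul_eq_left_of_isUnit_det _ _ (UnitaryGroup.det_isUnit ⟨_, hUstar⟩),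
    rank_mul_eq_right_of_isUnit_det _ _ (UnitaryGroup.det_isUnit ⟨U, hU⟩), rank_diagonal]
  simp only [ne_eq, Complex.ofReal_eq_zero]

variable (N : Matrix ι ι ℂ → ℝ) (hN_tri : ∀ A B, N (A + B) ≤ N A + N B)
  (hN_smul : ∀ (c : ℂ) A, N (c • A) = ‖c‖ * N A)

noncomputable def diagonalSeminorm : Seminorm ℝ (ι → ℝ) :=
  Seminorm.of (fun d => N (diagonal fun i => (d i : ℂ)))
    (fun d e => by simpa only [Pi.add_apply, Complex.ofReal_add, ← diagonal_add] using hN_tri _ _)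
    (fun a d => by
      have hdiag : (diagonal fun i => ((a • d) i : ℂ)) = (a : ℂ) • diagonal fun i => (d i : ℂ) := by
        rw [← diagonal_smul]
        congr 1
        ext i
        simp
      simp only [hdiag, hN_smul, Complex.norm_real])

variable {N} (hN_usi : ∀ (A U : Matrix ι ι ℂ), U ∈ unitaryGroup ι ℂ → N (Uᴴ * A * U) = N A)
include hN_usi

lemma diagonalSeminorm_comp_perm (σ : Equiv.Perm ι) (d : ι → ℝ) :
    diagonalSeminorm N hN_tri hN_smul (d ∘ σ) = diagonalSeminorm N hN_tri hN_smul d := by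
  have := hN_usi (diagonal fun i => (d i : ℂ)) _ (permMatrix_mem_unitaryGroup σ⁻¹)
  rwa [conjTranspose_permMatrix, inv_inv, ← diagonal_comp_perm] at this

lemma map_conjDiagonal {U : Matrix ι ι ℂ} (hU : U ∈ unitaryGroup ι ℂ) (d : ι → ℝ) :
    N (conjDiagonal U d) = diagonalSeminorm N hN_tri hN_smul d := by
  have hUstar : Uᴴ ∈ unitaryGroup ι ℂ := by
    rw [← star_eq_conjTranspose]; exact Unitary.star_mem hU
  have := hN_usi (diagonal fun i => (d i : ℂ)) Uᴴ hUstar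
  rwa [conjTranspose_conjTranspose] at this

end UnitarilyInvariant

section Density

variable {n : ℕ}

lemma IsDensity.exists_eq_conjDiagonal {X : Matrix (Fin n) (Fin n) ℂ} (hX : IsDensity X) :
    ∃ U ∈ unitaryGroup (Fin n) ℂ, ∃ x ∈ stdSimplex ℝ (Fin n), X = conjDiagonal U x := by
  have hH : X.IsHermitian := hX.1.1
  have hX_eq : X = conjDiagonal hH.eigenvectorUnitary hH.eigenvalues := hH.spectral_theorem
  refine ⟨_, (hH.eigenvectorUnitary).2, _, ⟨hX.1.eigenvalues_nonneg, ?_⟩, hX_eq⟩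
  have htrace := hX.2
  rw [hX_eq, conjDiagonal, trace_mul_cycle, ← star_eq_conjTranspose,
    mem_unitaryGroup_iff'.1 (hH.eigenvectorUnitary).2, Matrix.one_mul, trace_diagonal] at htrace
  exact_mod_cast htrace

lemma isDensity_conjDiagonal {U : Matrix (Fin n) (Fin n) ℂ} (hU : U ∈ unitaryGroup (Fin n) ℂ)
    {y : Fin n → ℝ} (hy : y ∈ stdSimplex ℝ (Fin n)) : IsDensity (conjDiagonal U y) := by
  have hdiag : (diagonal fun i => (y i : ℂ)).PosSemidef :=
    PosSemidef.diagonal fun i => Complex.zero_le_real.2 (hy.1 i)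
  refine ⟨hdiag.mul_mul_conjTranspose_same U, ?_⟩
  rw [conjDiagonal, trace_mul_cycle, ← star_eq_conjTranspose, mem_unitaryGroup_iff'.1 hU,
    Matrix.one_mul, trace_diagonal]
  exact_mod_cast hy.2

end Density

theorem stmt_7_general (k : ℕ) (hk1 : 1 ≤ k)
    (N : Matrix (Fin 3) (Fin 3) ℂ → ℝ)
    (hN_tri : ∀ A B, N (A + B) ≤ N A + N B)
    (hN_smul : ∀ (c : ℂ) A, N (c • A) = ‖c‖ * N A)
    (hN_usi : ∀ (A U : Matrix (Fin 3) (Fin 3) ℂ),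
      U ∈ Matrix.unitaryGroup (Fin 3) ℂ → N (Uᴴ * A * U) = N A)
    (X : Matrix (Fin 3) (Fin 3) ℂ) (hX : IsDensity X) :
    distToLowRank N k X
      ≤ distToLowRank N k ((1 / (3 : ℂ)) • (1 : Matrix (Fin 3) (Fin 3) ℂ)) := by
  set p := diagonalSeminorm N hN_tri hN_smul
  obtain ⟨U, hU, x, hx, rfl⟩ := hX.exists_eq_conjDiagonal
  have hone : (1 : Matrix (Fin 3) (Fin 3) ℂ) ∈ unitaryGroup (Fin 3) ℂ := one_mem _
  refine le_csInf ⟨_, _, isDensity_conjDiagonal hone (single_mem_stdSimplex ℝ 0),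
    (rank_conjDiagonal hone _).trans_le ((card_ne_zero_single_le 0 1).trans hk1), rfl⟩ ?_
  rintro _ ⟨_, hZ, hZk, rfl⟩
  obtain ⟨V, hV, z, hz, rfl⟩ := hZ.exists_eq_conjDiagonal
  obtain ⟨y, hy, hyk, hle⟩ := exists_sparse_le p (diagonalSeminorm_comp_perm hN_tri hN_smul hN_usi)
    hx hz (rank_conjDiagonal hV z ▸ hZk)
  have hbdd : BddBelow {t | ∃ Y, IsDensity Y ∧ Y.rank ≤ k ∧ t = N (conjDiagonal U x - Y)} :=
    ⟨0, by rintro _ ⟨_, -, -, rfl⟩; exact apply_nonneg (Seminorm.of N hN_tri hN_smul) _⟩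
  calc sInf _ ≤ N (conjDiagonal U x - conjDiagonal U y) :=
        csInf_le hbdd ⟨_, isDensity_conjDiagonal hU hy, (rank_conjDiagonal hU y).trans_le hyk, rfl⟩
    _ = p (x - y) := by rw [conjDiagonal_sub, map_conjDiagonal hN_tri hN_smul hN_usi hU]
    _ ≤ p ((fun _ => 1 / 3) - z) := hle
    _ = N ((1 / (3 : ℂ)) • 1 - conjDiagonal V z) := by
        rw [← map_conjDiagonal hN_tri hN_smul hN_usi hV, ← conjDiagonal_sub, conjDiagonal_const hV]
        norm_num

theorem stmt_7 (k : ℕ) (hk1 : 1 ≤ k) (hk3 : k ≤ 3)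
    (N : Matrix (Fin 3) (Fin 3) ℂ → ℝ)
    (hN_tri : ∀ A B, N (A + B) ≤ N A + N B)
    (hN_smul : ∀ (c : ℂ) A, N (c • A) = ‖c‖ * N A)
    (hN_def : ∀ A, N A = 0 ↔ A = 0)
    (hN_usi : ∀ (A U : Matrix (Fin 3) (Fin 3) ℂ),
      U ∈ Matrix.unitaryGroup (Fin 3) ℂ → N (Uᴴ * A * U) = N A)
    (X : Matrix (Fin 3) (Fin 3) ℂ) (hX : IsDensity X) :
    distToLowRank N k X
      ≤ distToLowRank N k ((1 / (3 : ℂ)) • (1 : Matrix (Fin 3) (Fin 3) ℂ)) :=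
  stmt_7_general k hk1 N hN_tri hN_smul hN_usi X hX
end

section
/- Suppose 1 ≤ k ≤ n, p ∈ [1, ∞), and distance is measured in the Schatten p-norm raised to the power p (i.e., the sum of p-th powers of singular values). Then the distance d((1/n)·I_n, D_{n,k})^p equals (n−k)/n^p + k·(1/k − 1/n)^p. -/
open Matrix BigOperators Finset
open scoped ComplexOrder

/-- The `p`-th power of the Schatten `p`-norm: the sum of `p`-th powers of singular values. -/
noncomputable def schattenPowP {n : ℕ} (p : ℝ) (A : Matrix (Fin n) (Fin n) ℂ) : ℝ :=
  ∑ i, (singVals A i) ^ p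

/-! Writing a density matrix `Y` as `U diag(μ) U*`, the matrix `I/n - Y` is unitarily diagonal with
entries `1/n - μᵢ`, so its Schatten `p`-power is `∑ |1/n - μᵢ|^p`, where `μ` is a probability
vector with at most `k` nonzero entries. Off a `k`-set containing the support of `μ` every term
equals `n^(-p)`; on that set, Jensen's inequality for the convex function `|1/n - ·|^p` bounds the
sum below by `k |1/n - 1/k|^p`. The uniform density on `k` basis vectors attains both bounds. -/

open Polynomial

section Spectrum

variable {𝕜 ι : Type*} [RCLike 𝕜] [Fintype ι] [DecidableEq ι]

theorem Matrix.charpoly_unitary_conj_diagonal (U : unitaryGroup ι 𝕜) (d : ι → 𝕜) :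
    ((U : Matrix ι ι 𝕜) * diagonal d * star (U : Matrix ι ι 𝕜)).charpoly
      = ∏ i, (X - C (d i)) := by
  rw [charpoly_mul_comm, ← mul_assoc, Unitary.coe_star_mul_self, one_mul, charpoly_diagonal]

theorem Matrix.IsHermitian.sum_comp_eigenvalues_of_charpoly_eq {A : Matrix ι ι 𝕜}
    (hA : A.IsHermitian) {d : ι → ℝ} (h : A.charpoly = ∏ i, (X - C (d i : 𝕜))) (f : ℝ → ℝ) :
    ∑ i, f (hA.eigenvalues i) = ∑ i, f (d i) := by
  have hroots : (univ.val.map hA.eigenvalues).map (RCLike.ofReal : ℝ → 𝕜)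
      = (univ.val.map d).map (RCLike.ofReal : ℝ → 𝕜) := by
    rw [Multiset.map_map, Multiset.map_map, ← hA.roots_charpoly_eq_eigenvalues, h, roots_prod]
    · simp
    · simp [prod_ne_zero_iff, X_sub_C_ne_zero]
  simpa [Multiset.map_map, Function.comp_def] using
    congrArg (fun s => (s.map f).sum) (Multiset.map_injective RCLike.ofReal_injective hroots)

theorem Matrix.smul_one_sub_unitary_conj_diagonal (U : unitaryGroup ι 𝕜) (c : 𝕜) (d : ι → 𝕜) :
    c • (1 : Matrix ι ι 𝕜) - (U : Matrix ι ι 𝕜) * diagonal d * star (U : Matrix ι ι 𝕜)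
      = (U : Matrix ι ι 𝕜) * diagonal (fun i => c - d i) * star (U : Matrix ι ι 𝕜) := by
  have hc : c • (1 : Matrix ι ι 𝕜)
      = (U : Matrix ι ι 𝕜) * diagonal (fun _ => c) * star (U : Matrix ι ι 𝕜) := by
    rw [← smul_one_eq_diagonal, Matrix.mul_smul, mul_one, Matrix.smul_mul,
      Unitary.mul_star_self_of_mem U.2]
  rw [hc, ← sub_mul, ← mul_sub, diagonal_sub]

end Spectrum

variable {n : ℕ}

theorem schattenPowP_unitary_conj_diagonal (p : ℝ) (U : unitaryGroup (Fin n) ℂ) (d : Fin n → ℝ) :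
    schattenPowP p ((U : Matrix (Fin n) (Fin n) ℂ) * diagonal (fun i => (d i : ℂ))
      * star (U : Matrix (Fin n) (Fin n) ℂ)) = ∑ i, |d i| ^ p := by
  set D : Matrix (Fin n) (Fin n) ℂ := diagonal (fun i => (d i : ℂ))
  set A := (U : Matrix (Fin n) (Fin n) ℂ) * D * star (U : Matrix (Fin n) (Fin n) ℂ)
  have hD : Dᴴ = D := by simp [D, diagonal_conjTranspose]
  have hA : Aᴴ * A = U * diagonal (fun i => ((d i ^ 2 : ℝ) : ℂ))
      * star (U : Matrix (Fin n) (Fin n) ℂ) := calc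
    Aᴴ * A = U * D * (star (U : Matrix (Fin n) (Fin n) ℂ) * U) * D
        * star (U : Matrix (Fin n) (Fin n) ℂ) := by
      simp only [A, conjTranspose_mul, hD, star_eq_conjTranspose, conjTranspose_conjTranspose,
        mul_assoc]
    _ = _ := by
      rw [Unitary.coe_star_mul_self, mul_one, mul_assoc (U : Matrix (Fin n) (Fin n) ℂ),
        diagonal_mul_diagonal]
      push_cast
      simp only [sq]
  have heig := (isHermitian_conjTranspose_mul_self A).sum_comp_eigenvalues_of_charpoly_eq
    (d := fun i => d i ^ 2) (by rw [hA, charpoly_unitary_conj_diagonal]; rfl) (fun x => √x ^ p)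
  simp only [schattenPowP, singVals, heig, Real.sqrt_sq_eq_abs]

theorem schattenPowP_smul_one_sub_unitary_conj_diagonal (p c : ℝ) (U : unitaryGroup (Fin n) ℂ)
    (d : Fin n → ℝ) :
    schattenPowP p ((c : ℂ) • (1 : Matrix (Fin n) (Fin n) ℂ) - (U : Matrix (Fin n) (Fin n) ℂ)
      * diagonal (fun i => (d i : ℂ)) * star (U : Matrix (Fin n) (Fin n) ℂ))
      = ∑ i, |c - d i| ^ p := by
  rw [smul_one_sub_unitary_conj_diagonal, ← schattenPowP_unitary_conj_diagonal p U]
  push_cast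
  rfl

section PowerMean

variable {ι : Type*}

theorem card_mul_rpow_abs_sub_mean_le {p : ℝ} (hp : 1 ≤ p) (c : ℝ) (μ : ι → ℝ) {T : Finset ι}
    (hT : T.Nonempty) :
    #T * |c - (∑ i ∈ T, μ i) / #T| ^ p ≤ ∑ i ∈ T, |c - μ i| ^ p := by
  have hcard : (0 : ℝ) < #T := by exact_mod_cast hT.card_pos
  have hw : ∑ _i ∈ T, (#T : ℝ)⁻¹ = 1 := by
    rw [sum_const, nsmul_eq_mul, mul_inv_cancel₀ hcard.ne']
  have hmean : c - (∑ i ∈ T, μ i) / #T = ∑ i ∈ T, (#T : ℝ)⁻¹ * (c - μ i) := by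
    rw [← mul_sum, sum_sub_distrib, sum_const, nsmul_eq_mul]
    field_simp
  have hjensen : |c - (∑ i ∈ T, μ i) / #T| ^ p ≤ ∑ i ∈ T, (#T : ℝ)⁻¹ * |c - μ i| ^ p := calc
    _ ≤ (∑ i ∈ T, (#T : ℝ)⁻¹ * |c - μ i|) ^ p := by
      gcongr
      rw [hmean]
      refine (abs_sum_le_sum_abs _ _).trans_eq (sum_congr rfl fun i _ => ?_)
      rw [abs_mul, abs_of_pos (inv_pos.mpr hcard)]
    _ ≤ _ := Real.rpow_arith_mean_le_arith_mean_rpow T _ _ (fun _ _ => by positivity) hw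
      (fun _ _ => abs_nonneg _) hp
  rw [← mul_sum] at hjensen
  calc _ ≤ (#T : ℝ) * ((#T : ℝ)⁻¹ * ∑ i ∈ T, |c - μ i| ^ p) := by gcongr
    _ = _ := by field_simp

theorem card_sub_mul_add_le_sum_rpow_abs_sub [Fintype ι] {p : ℝ} (hp : 1 ≤ p) (c : ℝ) {k : ℕ}
    (hk : 1 ≤ k) (hkι : k ≤ Fintype.card ι) (μ : ι → ℝ) (hsum : ∑ i, μ i = 1)
    (hsupp : #{i | μ i ≠ 0} ≤ k) :
    ((Fintype.card ι : ℝ) - k) * |c| ^ p + k * |c - 1 / k| ^ p ≤ ∑ i, |c - μ i| ^ p := by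
  classical
  obtain ⟨T, hsuppT, -, hTcard⟩ := exists_subsuperset_card_eq (subset_univ _) hsupp hkι
  have hzero : ∀ i ∈ Tᶜ, μ i = 0 := fun i hi => by
    by_contra h
    exact mem_compl.mp hi (hsuppT (by simpa using h))
  have hsumT : ∑ i ∈ T, μ i = 1 := by
    rw [← hsum, ← sum_add_sum_compl T, sum_eq_zero hzero, add_zero]
  have hTc : ∑ i ∈ Tᶜ, |c - μ i| ^ p = ((Fintype.card ι : ℝ) - k) * |c| ^ p := by
    rw [sum_congr rfl fun i hi => by rw [hzero i hi, sub_zero], sum_const, card_compl, hTcard,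
      nsmul_eq_mul, Nat.cast_sub hkι]
  have hT := card_mul_rpow_abs_sub_mean_le hp c μ (card_pos.mp (hTcard ▸ hk))
  rw [hsumT, hTcard] at hT
  rw [← sum_add_sum_compl T, hTc]
  linarith

end PowerMean

theorem card_sub_mul_add_le_schattenPowP_smul_one_sub {p : ℝ} (hp : 1 ≤ p) (c : ℝ) {k : ℕ}
    (hk : 1 ≤ k) (hkn : k ≤ n) {Y : Matrix (Fin n) (Fin n) ℂ} (hY : Y.IsHermitian)
    (htrace : Y.trace = 1) (hrank : Y.rank ≤ k) :
    ((n : ℝ) - k) * |c| ^ p + k * |c - 1 / k| ^ p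
      ≤ schattenPowP p ((c : ℂ) • (1 : Matrix (Fin n) (Fin n) ℂ) - Y) := by
  have hsum : ∑ i, hY.eigenvalues i = 1 := by
    have h := hY.trace_eq_sum_eigenvalues
    rw [htrace, ← RCLike.ofReal_sum] at h
    exact RCLike.ofReal_injective (h.symm.trans RCLike.ofReal_one.symm)
  have hsupp : #{i | hY.eigenvalues i ≠ 0} ≤ k := by
    rwa [hY.rank_eq_card_non_zero_eigs, Fintype.card_subtype] at hrank
  rw [hY.spectral_theorem, Unitary.conjStarAlgAut_apply]
  refine le_of_le_of_eq ?_ (schattenPowP_smul_one_sub_unitary_conj_diagonal p c _ _).symm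
  simpa using card_sub_mul_add_le_sum_rpow_abs_sub hp c hk (by simpa using hkn) _ hsum hsupp

theorem Fin.sum_ite_val_lt {M : Type*} [AddCommMonoidWithOne M] {k : ℕ} (hkn : k ≤ n) (a b : M) :
    ∑ i : Fin n, (if (i : ℕ) < k then a else b) = k • a + (n - k) • b := by
  rw [Finset.sum_ite, Finset.sum_const, Finset.sum_const, card_filter_val_lt, filter_not,
    card_sdiff_of_subset (filter_subset _ _), card_filter_val_lt, card_univ, Fintype.card_fin,
    min_eq_right hkn]

theorem exists_isDensity_rank_le_schattenPowP_smul_one_sub_eq (p c : ℝ) {k : ℕ} (hk : 1 ≤ k)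
    (hkn : k ≤ n) :
    ∃ Y : Matrix (Fin n) (Fin n) ℂ, IsDensity Y ∧ Y.rank ≤ k ∧
      schattenPowP p ((c : ℂ) • (1 : Matrix (Fin n) (Fin n) ℂ) - Y)
        = ((n : ℝ) - k) * |c| ^ p + k * |c - 1 / k| ^ p := by
  have hkR : (0 : ℝ) < k := by exact_mod_cast hk
  set d : Fin n → ℝ := fun i => if (i : ℕ) < k then 1 / k else 0
  refine ⟨diagonal fun i => (d i : ℂ), ⟨?_, ?_⟩, ?_, ?_⟩
  · refine posSemidef_diagonal_iff.mpr fun i => Complex.zero_le_real.mpr ?_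
    simp only [d]
    split_ifs <;> positivity
  · rw [trace_diagonal, ← Complex.ofReal_sum, Fin.sum_ite_val_lt hkn, nsmul_eq_mul, smul_zero]
    simp [hkR.ne']
  · rw [rank_diagonal, Fintype.card_subtype]
    refine (card_le_card fun i => ?_).trans (Fin.card_filter_val_lt.trans_le (min_le_right _ _))
    simp only [mem_filter, mem_univ, true_and, d]
    split_ifs with h <;> simp [h]
  · have hval := schattenPowP_smul_one_sub_unitary_conj_diagonal p c 1 d
    simp only [OneMemClass.coe_one, star_one, one_mul, mul_one] at hval
    rw [hval]
    have hterm : ∀ i : Fin n, |c - d i| ^ p = if (i : ℕ) < k then |c - 1 / k| ^ p else |c| ^ p :=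
      fun i => by simp only [d]; split_ifs <;> simp
    rw [sum_congr rfl fun i _ => hterm i, Fin.sum_ite_val_lt hkn, nsmul_eq_mul, nsmul_eq_mul,
      Nat.cast_sub hkn]
    ring

theorem stmt_9 (n k : ℕ) (hk1 : 1 ≤ k) (hkn : k ≤ n) (p : ℝ) (hp : 1 ≤ p) :
    distToLowRank (schattenPowP p) k ((1 / (n : ℂ)) • (1 : Matrix (Fin n) (Fin n) ℂ))
      = ((n : ℝ) - k) / (n : ℝ) ^ p + (k : ℝ) * (1 / (k : ℝ) - 1 / (n : ℝ)) ^ p := by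
  have hkR : (0 : ℝ) < k := by exact_mod_cast hk1
  have hscalar : (1 / (n : ℂ)) = ((1 / n : ℝ) : ℂ) := by push_cast; rfl
  have hvalue : ((n : ℝ) - k) * |1 / (n : ℝ)| ^ p + k * |1 / (n : ℝ) - 1 / k| ^ p
      = ((n : ℝ) - k) / (n : ℝ) ^ p + (k : ℝ) * (1 / (k : ℝ) - 1 / (n : ℝ)) ^ p := by
    rw [abs_sub_comm, abs_of_nonneg (sub_nonneg.mpr (one_div_le_one_div_of_le hkR
      (by exact_mod_cast hkn))), abs_of_nonneg (by positivity), Real.div_rpow zero_le_one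
      (Nat.cast_nonneg n), Real.one_rpow, mul_one_div]
  rw [distToLowRank, hscalar, ← hvalue]
  refine IsLeast.csInf_eq ⟨?_, ?_⟩
  · obtain ⟨Y, hY, hrank, hval⟩ :=
      exists_isDensity_rank_le_schattenPowP_smul_one_sub_eq p _ hk1 hkn
    exact ⟨Y, hY, hrank, hval.symm⟩
  · rintro t ⟨Y, hY, hrank, rfl⟩
    exact card_sub_mul_add_le_schattenPowP_smul_one_sub hp _ hk1 hkn hY.1.1 hY.2 hrank
end

section
/- Let p ∈ [2, 4], let 1 ≤ k < n be integers, and let k+1 ≤ m ≤ n be an integer. Then (m−k)/m^p + k·(1/k − 1/m)^p ≤ (n−k)/n^p + k·(1/k − 1/n)^p. -/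
/-!
Write `f(x) = (x - K) / x ^ p + K * (1 / K - 1 / x) ^ p` for real `x ≥ K > 0`; the claim is
`f m ≤ f n`, so it suffices that `f` is monotone on `[K, ∞)`. With `u = (x - K) / K` one computes
`f'(x) = K * (1 - (p - 1) * u + p * u ^ (p - 1)) / x ^ (p + 1)`, so everything reduces to the
one-variable inequality `q * u ≤ (q + 1) * u ^ q + 1` for `u ≥ 0` and `q = p - 1 ∈ [1, 3]`.
For `u ≥ 1` it follows from `u ≤ u ^ q`, and for `u ≤ 1` from `u ^ 3 ≤ u ^ q` and the cubic case.
-/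

open Real Set

noncomputable def twoLevelPowerSum (p K x : ℝ) : ℝ :=
  (x - K) / x ^ p + K * (1 / K - 1 / x) ^ p

/-- At `q = 3` this is tight: equality holds at `u = 1 / 2`. -/
lemma mul_le_add_one_mul_pow_three_add_one {q u : ℝ} (hq3 : q ≤ 3)
    (hu0 : 0 ≤ u) (hu1 : u ≤ 1) : q * u ≤ (q + 1) * u ^ 3 + 1 := by
  nlinarith [mul_nonneg (add_nonneg hu0 zero_le_one) (sq_nonneg (2 * u - 1)),
    mul_nonneg (mul_nonneg (sub_nonneg.2 hq3) hu0)
      (mul_nonneg (sub_nonneg.2 hu1) (by linarith : (0 : ℝ) ≤ 1 + u))]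

lemma mul_le_add_one_mul_rpow_add_one {q u : ℝ} (hq1 : 1 ≤ q) (hq3 : q ≤ 3) (hu : 0 ≤ u) :
    q * u ≤ (q + 1) * u ^ q + 1 := by
  have hrpow : 0 ≤ u ^ q := rpow_nonneg hu q
  rcases le_total u 1 with hu1 | hu1
  · have hcube : u ^ 3 ≤ u ^ q := by
      simpa using rpow_le_rpow_of_exponent_ge' hu hu1 (by linarith) hq3
    nlinarith [mul_le_add_one_mul_pow_three_add_one hq3 hu hu1]
  · have hlin : u ≤ u ^ q := by
      simpa using rpow_le_rpow_of_exponent_le hu1 hq1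
    nlinarith

lemma hasDerivAt_twoLevelPowerSum {p K x : ℝ} (hp : 1 ≤ p) (hK : 0 < K) (hKx : K ≤ x) :
    HasDerivAt (twoLevelPowerSum p K)
      ((x - p * (x - K) + K * p * ((x - K) / K) ^ (p - 1)) / x ^ (p + 1)) x := by
  have hx : 0 < x := hK.trans_le hKx
  have hxp : x ^ (p + 1) = x ^ (p - 1) * x ^ 2 := by
    rw [← rpow_two, ← rpow_add hx]; ring_nf
  have hbase : 1 / K - 1 / x = ((x - K) / K) / x := by field_simp
  have hquot : HasDerivAt (fun y => (y - K) / y ^ p)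
      ((1 * x ^ p - (x - K) * (p * x ^ (p - 1))) / (x ^ p) ^ 2) x :=
    ((hasDerivAt_id x).sub_const K).div (hasDerivAt_rpow_const (Or.inl hx.ne'))
      (rpow_pos_of_pos hx p).ne'
  have hinv : HasDerivAt (fun y => 1 / K - 1 / y) ((x ^ 2)⁻¹) x := by
    simpa [one_div] using (hasDerivAt_inv hx.ne').const_sub (1 / K)
  refine (hquot.add ((hinv.rpow_const (Or.inr hp)).const_mul K)).congr_deriv ?_
  rw [hbase, div_rpow (div_nonneg (sub_nonneg.2 hKx) hK.le) hx.le, hxp,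
    show x ^ p = x ^ (p - 1) * x by rw [← rpow_add_one hx.ne', sub_add_cancel]]
  have : 0 < x ^ (p - 1) := rpow_pos_of_pos hx _
  field_simp

lemma monotoneOn_twoLevelPowerSum {p K : ℝ} (hp2 : 2 ≤ p) (hp4 : p ≤ 4) (hK : 0 < K) :
    MonotoneOn (twoLevelPowerSum p K) (Ici K) := by
  have hderiv : ∀ x ∈ Ici K, HasDerivAt (twoLevelPowerSum p K)
      ((x - p * (x - K) + K * p * ((x - K) / K) ^ (p - 1)) / x ^ (p + 1)) x :=
    fun x hx => hasDerivAt_twoLevelPowerSum (by linarith) hK hx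
  refine monotoneOn_of_hasDerivWithinAt_nonneg (convex_Ici K)
    (fun x hx => (hderiv x hx).continuousAt.continuousWithinAt)
    (fun x hx => (hderiv x (interior_subset hx)).hasDerivWithinAt) fun x hx => ?_
  obtain hKx : K ≤ x := interior_subset hx
  set u := (x - K) / K with hu
  have hxu : x = K + K * u := by rw [hu]; field_simp; ring
  have hkey := mul_le_add_one_mul_rpow_add_one (q := p - 1) (u := u) (by linarith) (by linarith)
    (div_nonneg (sub_nonneg.2 hKx) hK.le)
  have hnum : x - p * (x - K) + K * p * u ^ (p - 1)
      = K * (1 - (p - 1) * u + p * u ^ (p - 1)) := by rw [hxu]; ring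
  rw [sub_add_cancel] at hkey
  rw [hnum]
  exact div_nonneg (mul_nonneg hK.le (by linarith)) (rpow_nonneg (hK.le.trans hKx) _)

theorem stmt_12_general (p : ℝ) (hp : 2 ≤ p) (hp4 : p ≤ 4) (k m n : ℕ)
    (hk : 1 ≤ k) (hm1 : k + 1 ≤ m) (hm2 : m ≤ n) :
    ((m : ℝ) - k) / (m : ℝ) ^ p + (k : ℝ) * (1 / (k : ℝ) - 1 / (m : ℝ)) ^ p
      ≤ ((n : ℝ) - k) / (n : ℝ) ^ p + (k : ℝ) * (1 / (k : ℝ) - 1 / (n : ℝ)) ^ p := by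
  have hk0 : (0 : ℝ) < k := by exact_mod_cast hk
  have hkm : (k : ℝ) ≤ m := by exact_mod_cast (Nat.le_succ k).trans hm1
  have hmn : (m : ℝ) ≤ n := by exact_mod_cast hm2
  exact monotoneOn_twoLevelPowerSum hp hp4 hk0 hkm (hkm.trans hmn) hmn

theorem stmt_12 (p : ℝ) (hp : 2 ≤ p) (hp4 : p ≤ 4) (k m n : ℕ)
    (hk : 1 ≤ k) (hkn : k < n) (hm1 : k + 1 ≤ m) (hm2 : m ≤ n) :
    ((m : ℝ) - k) / (m : ℝ) ^ p + (k : ℝ) * (1 / (k : ℝ) - 1 / (m : ℝ)) ^ p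
      ≤ ((n : ℝ) - k) / (n : ℝ) ^ p + (k : ℝ) * (1 / (k : ℝ) - 1 / (n : ℝ)) ^ p :=
  stmt_12_general p hp hp4 k m n hk hm1 hm2
end

section
/- For every real p > 4, the limit as m → ∞ of (m−1)·2^p + 2m·(1 − 1/m)^p − m·(2 + 2^p)·(1 − 1/(3m))^p equals ((p − 3)·2^p − 4p)/3, and this value is strictly positive. -/
/-!
Writing the powers as `(1 + c / m) ^ p` with `c = -1` and `c = -1/3`, each `m · ((1 + c / m) ^ p - 1)`
tends to `c · p`, the derivative of `y ↦ y ^ p` at `1` scaled by `c`; the expression is a linear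
combination of these two quantities and the constant `-2 ^ p`. Positivity of the limit comes from
`2 ^ p > 16` for `p > 4`.
-/

open Filter Topology

theorem HasDerivAt.tendsto_mul_sub_atTop {f : ℝ → ℝ} {f' x : ℝ} (hf : HasDerivAt f f' x)
    (c : ℝ) : Tendsto (fun m : ℝ => m * (f (x + c / m) - f x)) atTop (𝓝 (c * f')) := by
  rcases eq_or_ne c 0 with rfl | hc
  · simp
  have hstep : Tendsto (fun m : ℝ => c / m) atTop (𝓝[≠] 0) := by
    refine tendsto_nhdsWithin_iff.2 ⟨tendsto_const_nhds.div_atTop tendsto_id, ?_⟩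
    filter_upwards [eventually_gt_atTop 0] with m hm using div_ne_zero hc hm.ne'
  have hslope := ((hasDerivAt_iff_tendsto_slope_zero.1 hf).comp hstep).const_mul c
  refine hslope.congr' ?_
  filter_upwards [eventually_gt_atTop 0] with m hm
  simp only [Function.comp_apply, smul_eq_mul, inv_div]
  field_simp

theorem tendsto_mul_one_add_div_rpow_sub_one (p c : ℝ) :
    Tendsto (fun m : ℝ => m * ((1 + c / m) ^ p - 1)) atTop (𝓝 (c * p)) := by
  have hf : HasDerivAt (fun y : ℝ => y ^ p) p 1 := by
    simpa using Real.hasDerivAt_rpow_const (p := p) (Or.inl one_ne_zero)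
  simpa using hf.tendsto_mul_sub_atTop c

theorem four_mul_lt_sub_three_mul_two_rpow {p : ℝ} (hp : 4 < p) :
    4 * p < (p - 3) * 2 ^ p := by
  have h16 : (16 : ℝ) < 2 ^ p := by
    calc (16 : ℝ) = 2 ^ (4 : ℝ) := by norm_num
      _ < 2 ^ p := Real.rpow_lt_rpow_of_exponent_lt (by norm_num) hp
  nlinarith

theorem stmt_16 (p : ℝ) (hp : 4 < p) :
    Tendsto (fun m : ℝ =>
        (m - 1) * 2 ^ p + 2 * m * (1 - 1 / m) ^ p - m * (2 + 2 ^ p) * (1 - 1 / (3 * m)) ^ p)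
      atTop (nhds (((p - 3) * 2 ^ p - 4 * p) / 3)) ∧
    0 < ((p - 3) * 2 ^ p - 4 * p) / 3 := by
  refine ⟨?_, by linarith [four_mul_lt_sub_three_mul_two_rpow hp]⟩
  have hA := tendsto_mul_one_add_div_rpow_sub_one p (-1)
  have hB := tendsto_mul_one_add_div_rpow_sub_one p (-1 / 3)
  have hlim := ((hA.const_mul 2).sub (hB.const_mul (2 + 2 ^ p))).sub_const (2 ^ p)
  convert hlim using 1
  · funext m
    rcases eq_or_ne m 0 with rfl | hm
    · simp
    · rw [show (1 : ℝ) - 1 / m = 1 + -1 / m by ring,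
        show (1 : ℝ) - 1 / (3 * m) = 1 + -1 / 3 / m by field_simp; ring]
      ring
  · congr 1
    ring
end
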